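/- arXiv:1904.01858 — 9 statements merged into one kernel-verified Lean document; each statement's English description precedes it below -/
import Mathlib

section
/- A finite abelian group G is code-perfect if and only if there exist an integer d ≥ 0 and a finite abelian group Q of odd order such that G is isomorphic to the direct product (ℤ/2ℤ)^d × Q (where for d = 0 this product is interpreted as Q). -/
/-!
If `g` has order 4 and `S` makes `H = ⟨g²⟩ = {1, g²}` a perfect code in `Cay(G, S)`, then, `S`
being inverse-closed, `g` is adjacent to `1` iff `g ∈ S` iff `g` is adjacent to `g²`: two
neighbours in `H`. Conversely, without elements of order 4 every `g²` has odd order, so every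
involution of `G ⧸ H` lifts to an involution of `G`. This gives an inverse-closed transversal
`T ∋ 1` of `H`, and `H` is a perfect code in `Cay(G, T \ {1})`. Finally, a finite abelian group
without elements of order 4 is the direct product of the kernel and the image of squaring, an
elementary abelian 2-group and a group of odd order.
-/

/-- The Cayley graph of a group `G` with connection set `S`: distinct vertices `x`, `y`
are adjacent iff `y * x⁻¹ ∈ S` (for inverse-closed `S` this relation is symmetric). -/
def cayley (G : Type*) [Group G] (S : Set G) : SimpleGraph G :=
  SimpleGraph.fromRel (fun x y => y * x⁻¹ ∈ S)

/-- `C` is a perfect code in the graph `Γ`: `C` is an independent set and every vertex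
outside `C` is adjacent to exactly one vertex of `C`. -/
def IsPerfectCode {V : Type*} (Γ : SimpleGraph V) (C : Set V) : Prop :=
  (∀ u ∈ C, ∀ v ∈ C, ¬ Γ.Adj u v) ∧ ∀ v ∉ C, ∃! u, u ∈ C ∧ Γ.Adj v u

/-- `C` is a perfect code of the group `G`: there is an inverse-closed `S ⊆ G` with
`1 ∉ S` such that `C` is a perfect code in `Cay(G, S)`. -/
def IsPerfectCodeOfGroup (G : Type*) [Group G] (C : Set G) : Prop :=
  ∃ S : Set G, S⁻¹ = S ∧ (1 : G) ∉ S ∧ IsPerfectCode (cayley G S) C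

/-- A group is code-perfect if every subgroup is a perfect code of the group. -/
def IsCodePerfect (G : Type*) [Group G] : Prop :=
  ∀ H : Subgroup G, IsPerfectCodeOfGroup G (H : Set G)

open Subgroup

section Cayley

variable {G : Type*} [Group G] {S : Set G}

theorem cayley_adj_iff (hS : S⁻¹ = S) {x y : G} :
    (cayley G S).Adj x y ↔ x ≠ y ∧ y * x⁻¹ ∈ S := by
  have hsymm : x * y⁻¹ ∈ S ↔ y * x⁻¹ ∈ S := by
    rw [← inv_inv (x * y⁻¹), ← Set.mem_inv, hS, mul_inv_rev, inv_inv]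
  rw [cayley, SimpleGraph.fromRel_adj, hsymm, or_self]

theorem isPerfectCodeOfGroup_of_isComplement {H : Subgroup G} {T : Set G} (hT : T⁻¹ = T)
    (h1 : (1 : G) ∈ T) (hTH : IsComplement T H) : IsPerfectCodeOfGroup G H := by
  have hS : (T \ {1})⁻¹ = T \ {1} := by
    ext g
    simp only [Set.mem_inv, Set.mem_sdiff, Set.mem_singleton_iff, inv_eq_one]
    rw [← Set.mem_inv, hT]
  have cancel : ∀ t ∈ T, ∀ t' ∈ T, ∀ h ∈ H, ∀ h' ∈ H, t * h = t' * h' → h = h' :=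
    fun t ht t' ht' h hh h' hh' heq =>
      congrArg (fun p : T × H => (p.2 : G)) (hTH.1 (a₁ := (⟨t, ht⟩, ⟨h, hh⟩))
        (a₂ := (⟨t', ht'⟩, ⟨h', hh'⟩)) heq)
  refine ⟨T \ {1}, hS, fun h => h.2 rfl, fun u hu v hv hadj => ?_, fun v hv => ?_⟩
  · obtain ⟨-, ⟨hvuT, hvu1⟩⟩ := (cayley_adj_iff hS).1 hadj
    exact hvu1 (cancel _ hvuT _ h1 _ (one_mem H) _ (mul_mem hv (inv_mem hu))
      (by rw [one_mul, mul_one])).symm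
  · obtain ⟨⟨⟨t, ht⟩, ⟨h, hh⟩⟩, rfl⟩ := hTH.2 v
    have ht1 : t ≠ 1 := by rintro rfl; exact hv (by simpa using hh)
    refine ⟨h, ⟨hh, ?_⟩, fun u ⟨hu, hadj⟩ => ?_⟩
    · rw [SimpleGraph.adj_comm, cayley_adj_iff hS, mul_inv_cancel_right]
      exact ⟨fun hth => hv (hth ▸ hh), ht, ht1⟩
    · rw [SimpleGraph.adj_comm, cayley_adj_iff hS] at hadj
      exact cancel _ hadj.2.1 _ ht _ hu _ hh (inv_mul_cancel_right _ u)

end Cayley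

theorem exists_section_inv {α β : Type*} [InvolutiveInv α] [InvolutiveInv β] {f : α → β}
    (hf : ∀ a, f a⁻¹ = (f a)⁻¹) (hsurj : Function.Surjective f)
    (hlift : ∀ b, b⁻¹ = b → ∃ a, f a = b ∧ a⁻¹ = a) :
    ∃ σ : β → α, (∀ b, f (σ b) = b) ∧ ∀ b, σ b⁻¹ = (σ b)⁻¹ := by
  classical
  let _ : LinearOrder β := linearOrderOfSTO WellOrderingRel
  have hlift' : ∀ b, ∃ a, f a = b ∧ (b⁻¹ = b → a⁻¹ = a) := fun b => by
    by_cases hb : b⁻¹ = b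
    · obtain ⟨a, hab, ha⟩ := hlift b hb
      exact ⟨a, hab, fun _ => ha⟩
    · obtain ⟨a, hab⟩ := hsurj b
      exact ⟨a, hab, fun h => absurd h hb⟩
  choose τ hτ hτinv using hlift'
  -- of each pair `{b, b⁻¹}` the smaller element gets the chosen lift, the other its inverse
  refine ⟨fun b => if b ≤ b⁻¹ then τ b else (τ b⁻¹)⁻¹, fun b => ?_, fun b => ?_⟩
  · dsimp only
    split_ifs
    · exact hτ b
    · rw [hf, hτ, inv_inv]
  · rcases lt_trichotomy b b⁻¹ with h | h | h
    · simp [h.le, not_le.mpr h]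
    · simp only [← h, le_refl, if_true, hτinv b h.symm]
    · simp [h.le, not_le.mpr h]

section OrderFour

variable {G : Type*} [Group G]

theorem eq_one_or_eq_of_mem_zpowers {a u : G} (ha : a ^ 2 = 1) (hu : u ∈ zpowers a) :
    u = 1 ∨ u = a := by
  obtain ⟨k, rfl⟩ := mem_zpowers_iff.mp hu
  rcases Int.even_or_odd' k with ⟨m, rfl | rfl⟩ <;> simp [zpow_add, zpow_mul, ha]

theorem IsCodePerfect.sq_eq_one_of_pow_four_eq_one (hG : IsCodePerfect G) {g : G}
    (hg : g ^ 4 = 1) : g ^ 2 = 1 := by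
  by_contra hg2
  have hg1 : g ≠ 1 := by rintro rfl; simp at hg2
  have hgg : g ≠ g ^ 2 := fun h => hg1 (by simpa [pow_two] using h)
  have hmem : ∀ u ∈ zpowers (g ^ 2), u = 1 ∨ u = g ^ 2 :=
    fun u => eq_one_or_eq_of_mem_zpowers (by rw [← pow_mul]; exact hg)
  have hgH : g ∉ zpowers (g ^ 2) := fun h => (hmem g h).elim hg1 hgg
  obtain ⟨S, hS, -, -, hperfect⟩ := hG (zpowers (g ^ 2))
  obtain ⟨u, ⟨hu, hadj⟩, huniq⟩ := hperfect g hgH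
  have adj_one : (cayley G S).Adj g 1 ↔ g ∈ S := by
    rw [cayley_adj_iff hS, one_mul, ← Set.mem_inv, hS]
    exact and_iff_right hg1
  have adj_sq : (cayley G S).Adj g (g ^ 2) ↔ g ∈ S := by
    rw [cayley_adj_iff hS, pow_two, mul_inv_cancel_right, ← pow_two]
    exact and_iff_right hgg
  have hgS : g ∈ S := by
    rcases hmem u hu with rfl | rfl
    exacts [adj_one.1 hadj, adj_sq.1 hadj]
  exact hg2 ((huniq _ ⟨mem_zpowers _, adj_sq.2 hgS⟩).trans
    (huniq 1 ⟨one_mem _, adj_one.2 hgS⟩).symm)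

variable [Finite G]

theorem odd_orderOf_sq (hG : ∀ g : G, g ^ 4 = 1 → g ^ 2 = 1) (g : G) :
    Odd (orderOf (g ^ 2)) := by
  by_contra hodd
  obtain ⟨t, ht⟩ := Nat.not_odd_iff_even.mp hodd
  have ht0 : 0 < t := by have := orderOf_pos (g ^ 2); omega
  have hgt : (g ^ 2) ^ t = 1 := by
    have h4 : (g ^ t) ^ 4 = 1 := by
      rw [← pow_mul, show t * 4 = 2 * (t + t) by ring, pow_mul, ← ht, pow_orderOf_eq_one]
    rw [← pow_mul, mul_comm, pow_mul]
    exact hG _ h4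
  have := orderOf_le_of_pow_eq_one ht0 hgt
  omega

theorem exists_mem_mul_sq_eq_one (hG : ∀ g : G, g ^ 4 = 1 → g ^ 2 = 1) {H : Subgroup G} {g : G}
    (hg : g ^ 2 ∈ H) : ∃ h ∈ H, (g * h) ^ 2 = 1 := by
  obtain ⟨t, ht⟩ := odd_orderOf_sq hG g
  -- `1 + 2 (2t² + 2t) = (2t + 1)²` is a multiple of the order of `g²`
  refine ⟨(g ^ 2) ^ (2 * t ^ 2 + 2 * t), pow_mem hg _, ?_⟩
  calc (g * (g ^ 2) ^ (2 * t ^ 2 + 2 * t)) ^ 2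
      = (g ^ 2) ^ ((2 * t + 1) * (2 * t + 1)) := by
        rw [← pow_mul g 2, ← pow_succ', ← pow_mul, ← pow_mul]; ring_nf
    _ = 1 := by rw [pow_mul, ← ht, pow_orderOf_eq_one, one_pow]

theorem exists_mk_eq_of_inv_eq_self (hG : ∀ g : G, g ^ 4 = 1 → g ^ 2 = 1)
    {H : Subgroup G} [H.Normal] {x : G ⧸ H} (hx : x⁻¹ = x) :
    ∃ g : G, (g : G ⧸ H) = x ∧ g⁻¹ = g := by
  obtain ⟨y, rfl⟩ := QuotientGroup.mk_surjective x
  have hy : y ^ 2 ∈ H := by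
    rw [← QuotientGroup.eq_one_iff, QuotientGroup.mk_pow, pow_two]
    exact mul_eq_one_iff_eq_inv.mpr hx.symm
  obtain ⟨h, hh, hyh⟩ := exists_mem_mul_sq_eq_one hG hy
  refine ⟨y * h, ?_, inv_eq_of_mul_eq_one_right (by rwa [← pow_two])⟩
  rw [QuotientGroup.mk_mul, (QuotientGroup.eq_one_iff h).mpr hh, mul_one]

theorem exists_isComplement_inv_eq (hG : ∀ g : G, g ^ 4 = 1 → g ^ 2 = 1)
    (H : Subgroup G) [H.Normal] : ∃ T : Set G, T⁻¹ = T ∧ (1 : G) ∈ T ∧ IsComplement T H := by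
  classical
  obtain ⟨σ, hσ, hσinv⟩ := exists_section_inv (fun _ => QuotientGroup.mk_inv H _)
    QuotientGroup.mk_surjective fun _ => exists_mk_eq_of_inv_eq_self hG
  set τ := Function.update σ 1 1
  have hτ : ∀ x, (τ x : G ⧸ H) = x := fun x => by
    rcases eq_or_ne x 1 with rfl | hx
    · simp [τ]
    · simp [τ, hx, hσ]
  have hτinv : ∀ x, τ x⁻¹ = (τ x)⁻¹ := fun x => by
    rcases eq_or_ne x 1 with rfl | hx
    · simp [τ]
    · simp [τ, hx, hσinv]
  refine ⟨Set.range τ, ?_, ⟨1, by simp [τ]⟩, isComplement_range_left hτ⟩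
  ext g
  simp only [Set.mem_inv, Set.mem_range]
  constructor
  · rintro ⟨x, hx⟩
    exact ⟨x⁻¹, by rw [hτinv, hx, inv_inv]⟩
  · rintro ⟨x, rfl⟩
    exact ⟨x⁻¹, hτinv x⟩

end OrderFour

theorem isCodePerfect_of_forall_pow_four_eq_one {G : Type*} [CommGroup G] [Finite G]
    (hG : ∀ g : G, g ^ 4 = 1 → g ^ 2 = 1) : IsCodePerfect G := fun H => by
  obtain ⟨T, hT, h1, hTH⟩ := exists_isComplement_inv_eq hG H
  exact isPerfectCodeOfGroup_of_isComplement hT h1 hTH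

theorem sq_eq_one_of_mulEquiv_prod {G E Q : Type*} [Group G] [Group E] [Group Q]
    (hE : ∀ x : E, x ^ 2 = 1) (hQ : Odd (Nat.card Q)) (e : G ≃* E × Q) {g : G}
    (hg : g ^ 4 = 1) : g ^ 2 = 1 := by
  have hQ4 : (Nat.card Q).Coprime 4 := by
    simpa using hQ.coprime_two_right.pow_right 2
  have h4 : e g ^ 4 = 1 := by rw [← map_pow, hg, map_one]
  have hsnd : (e g).2 = 1 :=
    hQ4.pow_left_bijective.injective (by simpa using congrArg Prod.snd h4)
  apply e.injective
  rw [map_pow, map_one]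
  exact Prod.ext (hE _) (by rw [Prod.pow_snd, hsnd, one_pow, Prod.snd_one])

theorem pi_zmod_two_sq_eq_one {d : ℕ} (x : Fin d → Multiplicative (ZMod 2)) : x ^ 2 = 1 :=
  funext fun i => by simpa using pow_card_eq_one (x := x i)

theorem exists_mulEquiv_pi_zmod_two {A : Type*} [CommGroup A] [Finite A]
    (hA : ∀ a : A, a ^ 2 = 1) : ∃ d : ℕ, Nonempty (A ≃* (Fin d → Multiplicative (ZMod 2))) := by
  let _ : Module (ZMod 2) (Additive A) := AddCommGroup.zmodModule fun a => hA a.toMul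
  exact ⟨_, ⟨(AddEquiv.toMultiplicativeRight
    (Module.finBasis (ZMod 2) (Additive A)).equivFun.toAddEquiv).trans
      (MulEquiv.funMultiplicative _ _)⟩⟩

section Squaring

variable {G : Type*} [CommGroup G]

theorem disjoint_ker_range_powMonoidHom_two (hG : ∀ g : G, g ^ 4 = 1 → g ^ 2 = 1) :
    Disjoint (powMonoidHom 2 : G →* G).ker (powMonoidHom 2 : G →* G).range := by
  rw [Subgroup.disjoint_def]
  rintro _ hker ⟨y, rfl⟩
  simp only [MonoidHom.mem_ker, powMonoidHom_apply, ← pow_mul] at hker ⊢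
  exact hG y hker

variable [Finite G]

theorem isComplement'_ker_range_powMonoidHom_two (hG : ∀ g : G, g ^ 4 = 1 → g ^ 2 = 1) :
    IsComplement' (powMonoidHom 2 : G →* G).ker (powMonoidHom 2 : G →* G).range :=
  isComplement'_of_card_mul_and_disjoint (by rw [← index_ker, card_mul_index])
    (disjoint_ker_range_powMonoidHom_two hG)

theorem odd_card_range_powMonoidHom_two (hG : ∀ g : G, g ^ 4 = 1 → g ^ 2 = 1) :
    Odd (Nat.card (powMonoidHom 2 : G →* G).range) := by
  by_contra heven
  have := Fact.mk Nat.prime_two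
  obtain ⟨x, hx⟩ := exists_prime_orderOf_dvd_card' 2 (Nat.not_odd_iff_even.mp heven).two_dvd
  have hker : (x : G) ∈ (powMonoidHom 2 : G →* G).ker := by
    rw [MonoidHom.mem_ker, powMonoidHom_apply, ← orderOf_dvd_iff_pow_eq_one, orderOf_coe, hx]
  have hx1 := (disjoint_ker_range_powMonoidHom_two hG).le_bot ⟨hker, x.2⟩
  rw [Subgroup.mem_bot, OneMemClass.coe_eq_one] at hx1
  simp [hx1] at hx

theorem exists_mulEquiv_pi_zmod_two_prod (hG : ∀ g : G, g ^ 4 = 1 → g ^ 2 = 1) :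
    ∃ (d : ℕ) (Q : Type) (_ : CommGroup Q) (_ : Fintype Q),
      Odd (Fintype.card Q) ∧ Nonempty (G ≃* ((Fin d → Multiplicative (ZMod 2)) × Q)) := by
  set K := (powMonoidHom 2 : G →* G).ker
  set R := (powMonoidHom 2 : G →* G).range
  obtain ⟨d, ⟨eK⟩⟩ := exists_mulEquiv_pi_zmod_two (A := K) fun a => Subtype.ext a.2
  let eKR : K × R ≃* G :=
    MulEquiv.ofBijective (K.subtype.coprod R.subtype) (isComplement'_ker_range_powMonoidHom_two hG)
  refine ⟨d, Shrink.{0} R, inferInstance, Fintype.ofFinite _, ?_,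
    ⟨eKR.symm.trans (eK.prodCongr Shrink.mulEquiv.symm)⟩⟩
  rw [Fintype.card_eq_nat_card, Nat.card_congr (equivShrink.{0} R).symm]
  exact odd_card_range_powMonoidHom_two hG

end Squaring

/-- A finite abelian group is code-perfect iff it is isomorphic to `(ℤ/2ℤ)^d × Q` for
some `d ≥ 0` and some finite abelian group `Q` of odd order. -/
theorem abelian_code_perfect_iff (G : Type*) [CommGroup G] [Fintype G] :
    IsCodePerfect G ↔
      ∃ (d : ℕ) (Q : Type) (_ : CommGroup Q) (_ : Fintype Q),
        Odd (Fintype.card Q) ∧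
        Nonempty (G ≃* ((Fin d → Multiplicative (ZMod 2)) × Q)) := by
  constructor
  · exact fun h => exists_mulEquiv_pi_zmod_two_prod fun g => h.sq_eq_one_of_pow_four_eq_one
  · rintro ⟨d, Q, _, _, hQ, ⟨e⟩⟩
    exact isCodePerfect_of_forall_pow_four_eq_one fun g => sq_eq_one_of_mulEquiv_prod
      pi_zmod_two_sq_eq_one (by rwa [Nat.card_eq_fintype_card]) e
end

section
/- Let G be a nontrivial finite abelian group which is not a simple group. Then no nontrivial proper subgroup of G is a perfect code of G if and only if G is isomorphic to the cyclic group ℤ/2^m ℤ for some integer m ≥ 2. -/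
section Aux

variable {G : Type*} [CommGroup G]

lemma cayley_adj {S : Set G} (hS : S⁻¹ = S) {v u : G} :
    (cayley G S).Adj v u ↔ v ≠ u ∧ u * v⁻¹ ∈ S := by
  have key : ∀ x y : G, x * y⁻¹ ∈ S → y * x⁻¹ ∈ S := by
    intro x y hxy
    have : (x * y⁻¹)⁻¹ ∈ S⁻¹ := by
      rw [Set.mem_inv, inv_inv]; exact hxy
    rwa [hS, mul_inv_rev, inv_inv] at this
  constructor
  · rintro ⟨hne, h | h⟩
    · exact ⟨hne, h⟩
    · exact ⟨hne, key v u h⟩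
  · rintro ⟨hne, h⟩
    exact ⟨hne, Or.inl h⟩

lemma perfect_code_subgroup_iff (H : Subgroup G) :
    IsPerfectCodeOfGroup G (H : Set G) ↔
      ∀ g : G, g ^ 2 ∈ H → ∃ h ∈ H, (g * h) ^ 2 = 1 := by
  constructor
  · rintro ⟨S, hSinv, hS1, hind, hcode⟩ g hg
    by_cases hgH : g ∈ H
    · exact ⟨g⁻¹, H.inv_mem hgH, by simp⟩
    · obtain ⟨u, ⟨huH, hadj⟩, huniq⟩ := hcode g hgH
      rw [cayley_adj hSinv] at hadj
      obtain ⟨hne, hs⟩ := hadj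
      -- consider u' := g^2 * u⁻¹
      have hu' : g ^ 2 * u⁻¹ ∈ H := H.mul_mem hg (H.inv_mem huH)
      have hadj' : (cayley G S).Adj g (g ^ 2 * u⁻¹) := by
        rw [cayley_adj hSinv]
        constructor
        · intro hgu; exact hgH (hgu ▸ hu')
        · have h1 : g ^ 2 * u⁻¹ * g⁻¹ = (u * g⁻¹)⁻¹ := by
            rw [mul_inv_rev, inv_inv, pow_two]
            simp [mul_comm, mul_left_comm, mul_assoc]
          rw [h1, ← hSinv, Set.mem_inv, inv_inv]
          exact hs
      have heq : g ^ 2 * u⁻¹ = u := huniq _ ⟨hu', hadj'⟩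
      refine ⟨u⁻¹, H.inv_mem huH, ?_⟩
      have hg2 : g ^ 2 = u * u := mul_inv_eq_iff_eq_mul.mp heq
      rw [mul_pow, hg2]
      simp [pow_two, mul_comm, mul_left_comm, mul_assoc]
  · intro hP
    classical
    letI : LinearOrder (G ⧸ H) := IsWellOrder.linearOrder WellOrderingRel
    have sqlift : ∀ q : G ⧸ H, q ^ 2 = 1 →
        ∃ g : G, (QuotientGroup.mk g : G ⧸ H) = q ∧ g ^ 2 = 1 := by
      intro q hq
      obtain ⟨g, rfl⟩ := QuotientGroup.mk_surjective q
      have hg : g ^ 2 ∈ H := by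
        rwa [← QuotientGroup.eq_one_iff, QuotientGroup.mk_pow]
      obtain ⟨h, hh, hgh⟩ := hP g hg
      refine ⟨g * h, ?_, hgh⟩
      rw [QuotientGroup.mk_mul, (QuotientGroup.eq_one_iff h).2 hh, mul_one]
    choose w hw1 hw2 using sqlift
    set f : G ⧸ H → G := fun q =>
      if q = 1 then 1
      else if hq : q ^ 2 = 1 then w q hq
      else if q < q⁻¹ then Quotient.out q else (Quotient.out (q⁻¹ : G ⧸ H))⁻¹ with hf
    have hfq : ∀ q : G ⧸ H, (QuotientGroup.mk (f q) : G ⧸ H) = q := by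
      intro q
      by_cases h1 : q = 1
      · simp [hf, h1]
      by_cases h2 : q ^ 2 = 1
      · simp [hf, h1, h2, hw1]
      by_cases h3 : q < q⁻¹
      · simp [hf, h1, h2, h3, QuotientGroup.out_eq']
      · simp only [hf, if_neg h1, dif_neg h2, if_neg h3]
        rw [QuotientGroup.mk_inv, QuotientGroup.out_eq', inv_inv]
    have hfinv : ∀ q : G ⧸ H, f q⁻¹ = (f q)⁻¹ := by
      intro q
      by_cases h1 : q = 1
      · simp [hf, h1]
      by_cases h2 : q ^ 2 = 1
      · have hqq : q⁻¹ = q := by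
          rw [pow_two] at h2
          exact inv_eq_of_mul_eq_one_right h2
        have hfsq : f q = w q h2 := by simp [hf, h1, h2]
        rw [hqq, hfsq]
        have : (w q h2) ^ 2 = 1 := hw2 q h2
        rw [pow_two] at this
        exact (inv_eq_of_mul_eq_one_right this).symm
      · have h1' : q⁻¹ ≠ 1 := by simpa using h1
        have h2' : (q⁻¹) ^ 2 ≠ 1 := by
          simpa [inv_pow] using h2
        have hqne : q ≠ q⁻¹ := by
          intro hc
          apply h2
          rw [pow_two]
          nth_rewrite 2 [hc]
          simp
        by_cases h3 : q < q⁻¹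
        · have h3' : ¬ q⁻¹ < q⁻¹⁻¹ := by rw [inv_inv]; exact fun hc => absurd rfl (ne_of_lt (h3.trans hc))
          simp only [hf, if_neg h1, dif_neg h2, if_pos h3, if_neg h1', dif_neg h2', if_neg h3']
          rw [inv_inv]
        · have h3' : q⁻¹ < q⁻¹⁻¹ := by
            rw [inv_inv]
            rcases lt_or_gt_of_ne hqne with h | h
            · exact absurd h h3
            · exact h
          simp only [hf, if_neg h1, dif_neg h2, if_neg h3, if_pos h3', dif_neg h2', if_neg h1']
          rw [inv_inv]
    set S : Set G := Set.range f \ {1} with hSdef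
    have hmemS : ∀ {s : G}, s ∈ S → s = f (QuotientGroup.mk s) ∧ s ≠ 1 := by
      rintro s ⟨⟨q, rfl⟩, hs1⟩
      refine ⟨by rw [hfq], by simpa using hs1⟩
    have hSinv : S⁻¹ = S := by
      have key : ∀ s ∈ S, s⁻¹ ∈ S := by
        rintro s ⟨⟨q, rfl⟩, hs1⟩
        refine ⟨⟨q⁻¹, hfinv q⟩, ?_⟩
        simpa using hs1
      ext x
      constructor
      · intro hx
        rw [Set.mem_inv] at hx
        have := key _ hx
        simpa using this
      · intro hx
        rw [Set.mem_inv]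
        exact key _ hx
    refine ⟨S, hSinv, by simp [hSdef], ?_, ?_⟩
    · -- independence
      intro u hu v hv hadj
      rw [cayley_adj hSinv] at hadj
      obtain ⟨hne, hvS⟩ := hadj
      obtain ⟨heq, hne1⟩ := hmemS hvS
      have hH : v * u⁻¹ ∈ H := H.mul_mem hv (H.inv_mem hu)
      rw [(QuotientGroup.eq_one_iff _).2 hH] at heq
      apply hne1
      rw [heq]
      simp [hf]
    · -- perfect code property
      intro v hv
      have hq1 : (QuotientGroup.mk v : G ⧸ H) ≠ 1 := by
        rwa [ne_eq, QuotientGroup.eq_one_iff]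
      set q : G ⧸ H := QuotientGroup.mk v with hqdef
      refine ⟨(f q)⁻¹ * v, ⟨?_, ?_⟩, ?_⟩
      · -- membership in H
        rw [SetLike.mem_coe, ← QuotientGroup.eq_one_iff, QuotientGroup.mk_mul,
          QuotientGroup.mk_inv, hfq]
        simp [hqdef]
      · rw [cayley_adj hSinv]
        constructor
        · intro hc
          apply hv
          have : (f q)⁻¹ * v ∈ H := by
            rw [← QuotientGroup.eq_one_iff, QuotientGroup.mk_mul, QuotientGroup.mk_inv, hfq]
            simp [hqdef]
          rw [← hc] at this
          exact this
        · have : (f q)⁻¹ * v * v⁻¹ = f q⁻¹ := by rw [hfinv]; group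
          rw [this]
          refine ⟨⟨q⁻¹, rfl⟩, ?_⟩
          intro hc
          apply hq1
          have := hfq q⁻¹
          rw [Set.mem_singleton_iff] at hc
          rw [hc] at this
          simpa [hqdef] using this.symm
      · rintro u' ⟨hu'H, hadj⟩
        rw [cayley_adj hSinv] at hadj
        obtain ⟨hne, hS'⟩ := hadj
        obtain ⟨heq, -⟩ := hmemS hS'
        have hmk : (QuotientGroup.mk (u' * v⁻¹) : G ⧸ H) = q⁻¹ := by
          rw [QuotientGroup.mk_mul, QuotientGroup.mk_inv,
            (QuotientGroup.eq_one_iff u').2 hu'H, one_mul, hqdef]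
        rw [hmk, hfinv] at heq
        have : u' = (f q)⁻¹ * v := by
          rw [← heq]
          group
        exact this

end Aux

lemma cyclic_two_group_bad {A : Type*} [CommGroup A] [Finite A] [IsCyclic A] {m : ℕ}
    (hcard : Nat.card A = 2 ^ m) {H : Subgroup A} (hb : H ≠ ⊥) (ht : H ≠ ⊤) :
    ∃ g : A, g ^ 2 ∈ H ∧ ∀ h ∈ H, (g * h) ^ 2 ≠ 1 := by
  obtain ⟨a, ha⟩ := IsCyclic.exists_generator (α := A)
  have horder : orderOf a = 2 ^ m := by
    rw [orderOf_eq_card_of_forall_mem_zpowers ha, hcard]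
  obtain ⟨x0, hx0⟩ := IsCyclic.exists_generator (α := H)
  have hxH : (x0 : A) ∈ H := x0.2
  have hordx : orderOf (x0 : A) = Nat.card H := by
    rw [Subgroup.orderOf_coe, orderOf_eq_card_of_forall_mem_zpowers hx0]
  obtain ⟨k, hkm, hcardHk⟩ :=
    (Nat.dvd_prime_pow Nat.prime_two).mp (hcard ▸ Subgroup.card_subgroup_dvd_card H)
  have hk1 : 1 ≤ k := by
    rcases Nat.eq_zero_or_pos k with h0 | h
    · exfalso; apply hb
      rw [← Subgroup.card_eq_one, hcardHk, h0, pow_zero]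
    · exact h
  have hkm' : k < m := by
    rcases lt_or_eq_of_le hkm with h | h
    · exact h
    · exfalso; apply ht
      apply Subgroup.eq_top_of_card_eq
      rw [hcardHk, hcard, h]
  obtain ⟨t, ht'⟩ := mem_powers_iff_mem_zpowers.mpr (ha (x0 : A))
  have hteven : Even t := by
    by_contra hodd
    have ho : Odd t := Nat.not_even_iff_odd.mp hodd
    have hcop : (orderOf a).Coprime t := by
      rw [horder]
      exact Nat.Coprime.pow_left m (ho.coprime_two_left)
    have : orderOf ((x0 : A)) = 2 ^ m := by
      rw [← ht', hcop.orderOf_pow, horder]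
    rw [hordx, hcardHk] at this
    have := Nat.pow_right_injective (le_refl 2) this
    omega
  obtain ⟨u, hu⟩ := hteven
  refine ⟨a ^ u, ?_, ?_⟩
  · have : (a ^ u) ^ 2 = (x0 : A) := by
      rw [← pow_mul, ← ht', hu]; ring_nf
    rw [this]; exact hxH
  · intro h hh hc
    rw [mul_pow] at hc
    have hg2 : (a ^ u) ^ 2 = (x0 : A) := by
      rw [← pow_mul, ← ht', hu]; ring_nf
    rw [hg2] at hc
    -- h = x0 ^ j for some natural j
    obtain ⟨j, hj⟩ := mem_powers_iff_mem_zpowers.mpr (hx0 ⟨h, hh⟩)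
    have hj' : (x0 : A) ^ j = h := by
      have := congrArg (Subtype.val) hj
      simpa using this
    rw [← hj', ← pow_mul] at hc
    have hpow : (x0 : A) ^ (j * 2 + 1) = 1 := by
      rw [pow_add, pow_one, mul_comm]
      exact hc
    have hdvd := orderOf_dvd_of_pow_eq_one hpow
    rw [hordx, hcardHk] at hdvd
    have h2 : (2 : ℕ) ∣ 2 ^ k := dvd_pow_self 2 (by omega)
    obtain ⟨c, hc2⟩ := h2.trans hdvd
    omega

/-- For a nontrivial finite abelian non-simple group `G`, no nontrivial proper subgroup
of `G` is a perfect code of `G` iff `G ≅ ℤ/2^m ℤ` for some `m ≥ 2`. -/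
theorem no_nontrivial_proper_perfect_code_iff (G : Type*) [CommGroup G] [Fintype G]
    [Nontrivial G] (hns : ¬ IsSimpleGroup G) :
    (∀ H : Subgroup G, H ≠ ⊥ → H ≠ ⊤ → ¬ IsPerfectCodeOfGroup G (H : Set G)) ↔
      ∃ m : ℕ, 2 ≤ m ∧ Nonempty (G ≃* Multiplicative (ZMod (2 ^ m))) := by

  constructor
  · intro hall
    have hcpos : Nat.card G ≠ 0 := Nat.card_pos.ne'
    have hn2 : 2 ≤ Nat.card G := Finite.one_lt_card
    -- every prime dividing |G| is 2
    have hprime2 : ∀ {p : ℕ}, p.Prime → p ∣ Nat.card G → p = 2 := by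
      intro p hp hdvd
      by_contra hp2
      haveI : Fact p.Prime := ⟨hp⟩
      obtain ⟨y, hy⟩ := exists_prime_orderOf_dvd_card' p hdvd
      have hy1 : y ≠ 1 := by
        intro hc; rw [hc, orderOf_one] at hy; exact hp.one_lt.ne' hy.symm
      by_cases htop : Subgroup.zpowers y = ⊤
      · have hcardp : Nat.card G = p := by
          rw [← Subgroup.card_top (G := G), ← htop, Nat.card_zpowers, hy]
        exact hns (isSimpleGroup_of_prime_card hcardp)
      · refine hall (Subgroup.zpowers y)
          (by simpa [Subgroup.zpowers_eq_bot] using hy1) htop ?_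
        rw [perfect_code_subgroup_iff]
        intro g hg
        obtain ⟨t, ht⟩ := mem_powers_iff_mem_zpowers.mpr hg
        obtain ⟨r, hr⟩ := hp.odd_of_ne_two hp2
        refine ⟨y ^ (t * r), (Subgroup.zpowers y).pow_mem (Subgroup.mem_zpowers y) _, ?_⟩
        rw [mul_pow, ← ht, ← pow_mul, ← pow_add]
        have harith : t + t * r * 2 = p * t := by rw [hr]; ring
        rw [harith, pow_mul, ← hy, pow_orderOf_eq_one, one_pow]
    have hfact := Nat.eq_prime_pow_of_unique_prime_dvd hcpos
      (fun {d} hd hdvd => hprime2 hd hdvd)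
    set m := (Nat.card G).primeFactorsList.length with hm
    -- G is cyclic
    have hexpE : Monoid.ExponentExists G := Monoid.exponent_ne_zero.mp
      Monoid.exponent_ne_zero_of_finite
    obtain ⟨x, hx⟩ := Monoid.exists_orderOf_eq_exponent hexpE
    have hexp1 : 1 < Monoid.exponent G := Monoid.one_lt_exponent
    have hcyc : IsCyclic G := by
      by_cases hxt : Subgroup.zpowers x = ⊤
      · exact ⟨⟨x, fun z => by
          have : z ∈ Subgroup.zpowers x := hxt ▸ Subgroup.mem_top z
          exact this⟩⟩
      · exfalso
        have hxb : Subgroup.zpowers x ≠ ⊥ := by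
          rw [Ne, Subgroup.zpowers_eq_bot]
          intro hc
          rw [hc, orderOf_one] at hx
          omega
        apply hall _ hxb hxt
        rw [perfect_code_subgroup_iff]
        intro g hg
        obtain ⟨t, ht⟩ := mem_powers_iff_mem_zpowers.mpr hg
        rcases Nat.even_or_odd t with he | ho
        · obtain ⟨u, hu⟩ := he
          refine ⟨(x ^ u)⁻¹,
            (Subgroup.zpowers x).inv_mem ((Subgroup.zpowers x).pow_mem (Subgroup.mem_zpowers x) u), ?_⟩
          rw [mul_pow, ← ht, inv_pow, ← pow_mul, hu]
          rw [show u + u = u * 2 by ring]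
          simp
        · exfalso
          have hEdvd : Monoid.exponent G ∣ 2 ^ m := hfact ▸ Group.exponent_dvd_nat_card
          obtain ⟨k, hkm, hEk⟩ := (Nat.dvd_prime_pow Nat.prime_two).mp hEdvd
          have hk1 : 1 ≤ k := by
            rcases Nat.eq_zero_or_pos k with h0 | h
            · rw [h0, pow_zero] at hEk; omega
            · exact h
          have hcop : (orderOf x).Coprime t := by
            rw [hx, hEk]
            exact Nat.Coprime.pow_left k (ho.coprime_two_left)
          have hordg2 : orderOf (g ^ 2) = Monoid.exponent G := by
            rw [← ht, hcop.orderOf_pow, hx]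
          have hdvd2 : orderOf (g ^ 2) ∣ 2 ^ (k - 1) := by
            apply orderOf_dvd_of_pow_eq_one
            rw [← pow_mul]
            have h2k : 2 * 2 ^ (k - 1) = 2 ^ k := by
              rw [← pow_succ']
              congr 1
              omega
            rw [h2k, ← hEk]
            exact Monoid.pow_exponent_eq_one g
          rw [hordg2, hEk] at hdvd2
          have hle := Nat.le_of_dvd (by positivity) hdvd2
          have hlt : 2 ^ (k - 1) < 2 ^ k := Nat.pow_lt_pow_right (by norm_num) (by omega)
          omega
    have hm2 : 2 ≤ m := by
      by_contra hlt
      push_neg at hlt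
      interval_cases m
      · rw [pow_zero] at hfact; omega
      · haveI : Fact (Nat.Prime 2) := ⟨Nat.prime_two⟩
        exact hns (isSimpleGroup_of_prime_card (by rw [hfact, pow_one]))
    exact ⟨m, hm2, ⟨hfact ▸ (zmodCyclicMulEquiv hcyc).symm⟩⟩
  · rintro ⟨m, hm, ⟨e⟩⟩
    intro H hb ht hcode
    rw [perfect_code_subgroup_iff] at hcode
    haveI : IsCyclic G := isCyclic_of_surjective e.symm e.symm.surjective
    have hcard : Nat.card G = 2 ^ m := by
      rw [Nat.card_congr e.toEquiv]
      simp [Nat.card_zmod]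
    obtain ⟨g, hg1, hg2⟩ := cyclic_two_group_bad hcard hb ht
    obtain ⟨h, hh, he'⟩ := hcode g hg1
    exact hg2 h hh he'
end

section
/- Let n ≥ 2 be an integer, t ≥ 3 an odd integer dividing 2n, and s an integer with 0 ≤ s ≤ t − 1, and let x, y be the standard generators of the generalized quaternion group Q_{4n}. Then the subgroup ⟨x^t, x^s y⟩ is a perfect code in the Cayley graph Cay(Q_{4n}, S), where S = {x^i, x^{-i} : 1 ≤ i ≤ (t−1)/2}. -/
theorem IsPerfectCode.of_existsUnique {V : Type*} {Γ : SimpleGraph V} {C : Set V}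
    (h : ∀ v, ∃! u, u ∈ C ∧ (v = u ∨ Γ.Adj v u)) : IsPerfectCode Γ C := by
  refine ⟨fun u hu v hv huv => huv.ne ((h u).unique ⟨hu, .inl rfl⟩ ⟨hv, .inr huv⟩),
    fun v hv => ?_⟩
  obtain ⟨u, ⟨hu, hvu⟩, huniq⟩ := h v
  refine ⟨u, ⟨hu, hvu.resolve_left ?_⟩, fun w hw => huniq w ⟨hw.1, .inr hw.2⟩⟩
  rintro rfl
  exact hv hu

section Cayley

variable {G : Type*} [Group G] {S : Set G}

theorem cayley_eq_or_adj_iff (hS : S⁻¹ = S) (u v : G) :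
    (v = u ∨ (cayley G S).Adj v u) ↔ v * u⁻¹ ∈ insert 1 S := by
  have hsymm : u * v⁻¹ ∈ S ↔ v * u⁻¹ ∈ S := by
    rw [← Set.inv_mem_inv, hS, mul_inv_rev, inv_inv]
  rw [cayley, SimpleGraph.fromRel_adj, Set.mem_insert_iff, mul_inv_eq_one, hsymm, or_self]
  tauto

theorem isPerfectCode_cayley_of_isComplement {C : Set G} (hS : S⁻¹ = S)
    (h : Subgroup.IsComplement (insert 1 S) C) : IsPerfectCode (cayley G S) C := by
  refine IsPerfectCode.of_existsUnique fun v => ?_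
  simp_rw [cayley_eq_or_adj_iff hS]
  obtain ⟨⟨σ, c⟩, hσc, huniq⟩ := h.existsUnique v
  refine ⟨c, ⟨c.2, ?_⟩, fun u ⟨hu, hvu⟩ => ?_⟩
  · rw [← hσc, mul_inv_cancel_right]
    exact σ.2
  · exact congrArg (fun p => (p.2 : G)) (huniq (⟨_, hvu⟩, ⟨u, hu⟩) (by simp))

end Cayley

theorem insert_one_powers_eq_range_zpow_valMinAbs {G : Type*} [Group G] (x : G) {t : ℕ}
    (ht : Odd t) :
    insert 1 {g | ∃ i : ℕ, 1 ≤ i ∧ i ≤ (t - 1) / 2 ∧ (g = x ^ i ∨ g = (x ^ i)⁻¹)} =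
      Set.range fun r : ZMod t => x ^ r.valMinAbs := by
  have : NeZero t := ⟨ht.pos.ne'⟩
  have hhalf : (t - 1) / 2 = t / 2 := by obtain ⟨m, rfl⟩ := ht; omega
  ext g
  simp only [Set.mem_insert_iff, Set.mem_ofPred_eq, Set.mem_range]
  constructor
  · rintro (rfl | ⟨i, -, hi, rfl | rfl⟩)
    · exact ⟨0, by simp⟩
    · exact ⟨i, by rw [ZMod.valMinAbs_natCast_of_le_half (hhalf ▸ hi), zpow_natCast]⟩
    · refine ⟨-i, ?_⟩
      have : (-(i : ZMod t)).valMinAbs = -i := by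
        rw [ZMod.valMinAbs_spec, Set.mem_Ioc]
        push_cast
        exact ⟨rfl, by have := ht.pos; omega, by omega⟩
      rw [this, zpow_neg, zpow_natCast]
  · rintro ⟨r, rfl⟩
    have hr := ZMod.natAbs_valMinAbs_le r
    rcases lt_trichotomy r.valMinAbs 0 with h | h | h
    · refine .inr ⟨r.valMinAbs.natAbs, by omega, by omega, .inr ?_⟩
      rw [← zpow_natCast, ← zpow_neg]
      congr
      omega
    · rw [h, zpow_zero]
      exact .inl rfl
    · refine .inr ⟨r.valMinAbs.natAbs, by omega, by omega, .inl ?_⟩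
      rw [← zpow_natCast]
      congr
      omega

namespace QuaternionGroup

variable {n : ℕ}

theorem a_one_zpow (k : ℤ) : (a 1 : QuaternionGroup n) ^ k = a k := by
  cases k with
  | ofNat k => simp [a_one_pow]
  | negSucc k => rw [zpow_negSucc, a_one_pow, Int.cast_negSucc]; rfl

variable {t : ℕ} (htn : t ∣ n) (s : ℕ)

/-- With `x = a 1` and `y = xa 0`, Mathlib's `a i` is `x^i` and `xa i` is `y x^i`. -/
def residue : QuaternionGroup n → ZMod t
  | a i => ZMod.castHom (htn.mul_left 2) (ZMod t) i
  | xa i => ZMod.castHom (htn.mul_left 2) (ZMod t) i + s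

theorem residue_mul_a (g : QuaternionGroup n) (k : ZMod (2 * n)) :
    residue htn s (g * a k) = residue htn s g + ZMod.castHom (htn.mul_left 2) (ZMod t) k := by
  cases g <;> simp only [residue, a_mul_a, xa_mul_a, map_add, add_right_comm]

theorem residue_mul_zpow_valMinAbs (g : QuaternionGroup n) (r : ZMod t) :
    residue htn s (g * a 1 ^ r.valMinAbs) = residue htn s g + r := by
  rw [a_one_zpow, residue_mul_a, map_intCast, ZMod.coe_valMinAbs]

theorem castHom_natCast_self : ZMod.castHom (htn.mul_left 2) (ZMod t) (n : ZMod (2 * n)) = 0 := by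
  rw [map_natCast]
  exact (ZMod.natCast_eq_zero_iff _ _).mpr htn

def residueSubgroup : Subgroup (QuaternionGroup n) where
  carrier := {g | residue htn s g = 0}
  mul_mem' := by
    rintro (i | i) (j | j) hi hj <;>
      simp only [Set.mem_ofPred_eq, residue, a_mul_a, a_mul_xa, xa_mul_a, xa_mul_xa, map_add,
        map_sub] at hi hj ⊢
    · linear_combination hi + hj
    · linear_combination hj - hi
    · linear_combination hi + hj
    · linear_combination castHom_natCast_self htn + hj - hi
  one_mem' := by
    change residue htn s (a 0) = 0
    simp [residue]
  inv_mem' := by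
    rintro (i | i) hi
    · change residue htn s (a (-i)) = 0
      simp only [Set.mem_ofPred_eq, residue, map_neg] at hi ⊢
      rw [hi, neg_zero]
    · change residue htn s (xa (n + i)) = 0
      simp only [Set.mem_ofPred_eq, residue, map_add] at hi ⊢
      linear_combination castHom_natCast_self htn + hi

theorem closure_eq_residueSubgroup :
    Subgroup.closure {(a 1 : QuaternionGroup n) ^ t, a 1 ^ s * xa 0} = residueSubgroup htn s := by
  set H := Subgroup.closure {(a 1 : QuaternionGroup n) ^ t, a 1 ^ s * xa 0}
  have hxt : a 1 ^ t ∈ H := Subgroup.subset_closure (Set.mem_insert _ _)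
  have hxsy : a 1 ^ s * xa 0 ∈ H := Subgroup.subset_closure (Set.mem_insert_of_mem _ rfl)
  have ha_mem (i : ZMod (2 * n)) (hi : residue htn s (a i) = 0) : a i ∈ H := by
    rw [residue, ← ZMod.intCast_zmod_cast i, map_intCast, ZMod.intCast_zmod_eq_zero_iff_dvd] at hi
    obtain ⟨k, hk⟩ := hi
    rw [← ZMod.intCast_zmod_cast i, hk, ← a_one_zpow, zpow_mul, zpow_natCast]
    exact zpow_mem hxt k
  refine le_antisymm (Subgroup.closure_le _ |>.2 ?_) ?_
  · rintro g (rfl | rfl)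
    · change residue htn s (a 1 ^ t) = 0
      simp [a_one_pow, residue]
    · change residue htn s (a 1 ^ s * xa 0) = 0
      rw [a_one_pow, a_mul_xa, residue, zero_sub, map_neg, map_natCast, neg_add_cancel]
  · rintro (i | i) hi
    · exact ha_mem i hi
    · have hxa : xa i = (a 1 ^ s * xa 0) * a (i + (s : ZMod (2 * n))) := by
        rw [a_one_pow, a_mul_xa, xa_mul_a]
        ring_nf
      rw [hxa]
      refine mul_mem hxsy (ha_mem _ ?_)
      rwa [residue, map_add, map_natCast]

theorem isComplement_range_zpow_valMinAbs [NeZero t] :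
    Subgroup.IsComplement (Set.range fun r : ZMod t => (a 1 : QuaternionGroup n) ^ r.valMinAbs)
      (residueSubgroup htn s) := by
  rw [Subgroup.isComplement_iff_existsUnique_inv_mul_mem]
  intro g
  have key : ∀ r : ZMod t, (a 1 ^ r.valMinAbs)⁻¹ * g ∈ residueSubgroup htn s ↔
      residue htn s g⁻¹ + r = 0 := fun r => by
    rw [← inv_mem_iff, mul_inv_rev, inv_inv]
    exact (residue_mul_zpow_valMinAbs htn s _ r).congr_left
  refine ⟨⟨_, -residue htn s g⁻¹, rfl⟩, (key _).2 (add_neg_cancel _), ?_⟩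
  rintro ⟨_, r, rfl⟩ hr
  exact Subtype.ext <| congrArg (fun r : ZMod t => a 1 ^ r.valMinAbs) <|
    eq_neg_of_add_eq_zero_right ((key r).1 hr)

end QuaternionGroup

theorem quaternion_dicyclic_subgroup_perfect_code_explicit_general (n : ℕ)
    (t : ℕ) (htodd : Odd t) (htdvd : t ∣ 2 * n) (s : ℕ) :
    letI x : QuaternionGroup n := QuaternionGroup.a (1 : ZMod (2 * n))
    letI y : QuaternionGroup n := QuaternionGroup.xa (0 : ZMod (2 * n))
    letI S : Set (QuaternionGroup n) :=
      {g | ∃ i : ℕ, 1 ≤ i ∧ i ≤ (t - 1) / 2 ∧ (g = x ^ i ∨ g = (x ^ i)⁻¹)}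
    IsPerfectCode (cayley (QuaternionGroup n) S)
      ((Subgroup.closure {x ^ t, x ^ s * y}) : Set (QuaternionGroup n)) := by
  have htn : t ∣ n := htodd.coprime_two_right.dvd_of_dvd_mul_left htdvd
  have : NeZero t := ⟨htodd.pos.ne'⟩
  refine isPerfectCode_cayley_of_isComplement ?_ ?_
  · ext g
    simp only [Set.mem_inv, Set.mem_ofPred_eq, inv_eq_iff_eq_inv, inv_inv, or_comm]
  · rw [insert_one_powers_eq_range_zpow_valMinAbs _ htodd,
      QuaternionGroup.closure_eq_residueSubgroup htn s]
    exact QuaternionGroup.isComplement_range_zpow_valMinAbs htn s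

/-- In `Q_{4n}` (`n ≥ 2`), for odd `t ≥ 3` dividing `2n` and `0 ≤ s ≤ t - 1`, the
subgroup `⟨x^t, x^s y⟩` is a perfect code in `Cay(Q_{4n}, S)` where
`S = {x^i, x^{-i} : 1 ≤ i ≤ (t-1)/2}`. -/
theorem quaternion_dicyclic_subgroup_perfect_code_explicit (n : ℕ) (hn : 2 ≤ n)
    (t : ℕ) (ht : 3 ≤ t) (htodd : Odd t) (htdvd : t ∣ 2 * n) (s : ℕ) (hs : s ≤ t - 1) :
    letI x : QuaternionGroup n := QuaternionGroup.a (1 : ZMod (2 * n))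
    letI y : QuaternionGroup n := QuaternionGroup.xa (0 : ZMod (2 * n))
    letI S : Set (QuaternionGroup n) :=
      {g | ∃ i : ℕ, 1 ≤ i ∧ i ≤ (t - 1) / 2 ∧ (g = x ^ i ∨ g = (x ^ i)⁻¹)}
    IsPerfectCode (cayley (QuaternionGroup n) S)
      ((Subgroup.closure {x ^ t, x ^ s * y}) : Set (QuaternionGroup n)) :=
  quaternion_dicyclic_subgroup_perfect_code_explicit_general n t htodd htdvd s
end

section
/- Let G be a finite group, H a subgroup of G, and S an inverse-closed subset of G with e ∉ S. Then the following are equivalent: (a) the underlying set of H is a perfect code in the Cayley graph Cay(G,S); (b) S ∪ {e} is a left transversal of H in G; (c) S ∪ {e} is a right transversal of H in G. -/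
/-- `T` is a right transversal of `H` in `G`: it contains exactly one element of each
right coset `Hg`. -/
def IsRightTransversal {G : Type*} [Group G] (H : Subgroup G) (T : Set G) : Prop :=
  ∀ g : G, ∃! t, t ∈ T ∧ t * g⁻¹ ∈ H

/-- `T` is a left transversal of `H` in `G`: it contains exactly one element of each
left coset `gH`. -/
def IsLeftTransversal {G : Type*} [Group G] (H : Subgroup G) (T : Set G) : Prop :=
  ∀ g : G, ∃! t, t ∈ T ∧ g⁻¹ * t ∈ H

/-- For a subgroup `H` of a finite group `G` and an inverse-closed `S` with `1 ∉ S`,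
the following are equivalent: `H` is a perfect code in `Cay(G, S)`; `S ∪ {1}` is a left
transversal of `H` in `G`; `S ∪ {1}` is a right transversal of `H` in `G`. -/
theorem perfect_code_iff_transversal (G : Type*) [Group G] [Fintype G]
    (H : Subgroup G) (S : Set G) (hS : S⁻¹ = S) (he : (1 : G) ∉ S) :
    (IsPerfectCode (cayley G S) (H : Set G) ↔ IsLeftTransversal H (S ∪ {1})) ∧
    (IsPerfectCode (cayley G S) (H : Set G) ↔ IsRightTransversal H (S ∪ {1})) := by
  have hmem : ∀ a : G, a⁻¹ ∈ S ↔ a ∈ S := by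
    intro a
    conv_lhs => rw [← hS]
    rw [Set.mem_inv, inv_inv]
  have hadj : ∀ x y : G, (cayley G S).Adj x y ↔ y * x⁻¹ ∈ S := by
    intro x y
    simp only [cayley, SimpleGraph.fromRel_adj]
    constructor
    · rintro ⟨hne, h | h⟩
      · exact h
      · have : (x * y⁻¹)⁻¹ ∈ S := (hmem _).2 h
        simpa [mul_inv_rev] using this
    · intro h
      refine ⟨?_, Or.inl h⟩
      rintro rfl
      rw [mul_inv_cancel] at h
      exact he h
  have hPCL : IsPerfectCode (cayley G S) (H : Set G) ↔ IsLeftTransversal H (S ∪ {1}) := by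
    constructor
    · rintro ⟨hind, hdom⟩ g
      by_cases hg : g ∈ H
      · refine ⟨1, ⟨Set.mem_union_right _ rfl, by simpa using H.inv_mem hg⟩, ?_⟩
        rintro t ⟨htT, htH⟩
        rcases htT with hts | ht1
        · exfalso
          have htH' : t ∈ H := by
            have := H.mul_mem hg htH
            simpa using this
          have := hind t htH' 1 H.one_mem
          exact this ((hadj t 1).2 (by simpa using (hmem t).2 hts))
        · exact ht1
      · obtain ⟨u, ⟨huH, huA⟩, huniq⟩ := hdom g hg
        have huS : u * g⁻¹ ∈ S := (hadj g u).1 huA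
        refine ⟨g * u⁻¹, ⟨Set.mem_union_left _ (by simpa [mul_inv_rev] using (hmem (u * g⁻¹)).2 huS), by simp [H.inv_mem huH, mul_assoc]⟩, ?_⟩
        rintro t ⟨htT, htH⟩
        have ht1 : t ≠ 1 := by
          rintro rfl
          exact hg (by simpa using H.inv_mem htH)
        have htS : t ∈ S := htT.resolve_right ht1
        have hu' : t⁻¹ * g ∈ H := by simpa [mul_inv_rev] using H.inv_mem htH
        have hA' : (cayley G S).Adj g (t⁻¹ * g) := (hadj g _).2 (by simpa [mul_assoc] using (hmem t).2 htS)
        have := huniq (t⁻¹ * g) ⟨hu', hA'⟩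
        have : t⁻¹ * g = u := this
        calc t = g * (t⁻¹ * g)⁻¹ := by group
        _ = g * u⁻¹ := by rw [this]
    · intro hL
      constructor
      · intro u hu v hv hA
        have hsS : v * u⁻¹ ∈ S := (hadj u v).1 hA
        have hsH : v * u⁻¹ ∈ H := H.mul_mem hv (H.inv_mem hu)
        obtain ⟨t, _, huniq⟩ := hL 1
        have h1 := huniq 1 ⟨Set.mem_union_right _ rfl, by simpa using H.one_mem⟩
        have h2 := huniq (v * u⁻¹) ⟨Set.mem_union_left _ hsS, by simpa using hsH⟩
        have h3 : v * u⁻¹ = 1 := h2.trans h1.symm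
        rw [h3] at hsS
        exact he hsS
      · intro g hg
        obtain ⟨t, ⟨htT, htH⟩, huniq⟩ := hL g
        have ht1 : t ≠ 1 := by
          rintro rfl
          exact hg (by simpa using H.inv_mem htH)
        have htS : t ∈ S := htT.resolve_right ht1
        refine ⟨t⁻¹ * g, ⟨by simpa [mul_inv_rev] using H.inv_mem htH, (hadj g _).2 (by simpa [mul_assoc] using (hmem t).2 htS)⟩, ?_⟩
        rintro u ⟨huH, huA⟩
        have huS : u * g⁻¹ ∈ S := (hadj g u).1 huA
        have htS' : g * u⁻¹ ∈ S := by simpa [mul_inv_rev] using (hmem (u * g⁻¹)).2 huS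
        have := huniq (g * u⁻¹) ⟨Set.mem_union_left _ htS', by simpa [mul_assoc] using H.inv_mem huH⟩
        rw [← this, mul_inv_rev, inv_inv]
        simp [mul_assoc]
  have hTinv : ∀ a : G, a ∈ S ∪ {1} → a⁻¹ ∈ S ∪ {1} := by
    rintro a (haS | ha1)
    · exact Set.mem_union_left _ ((hmem a).2 haS)
    · rw [Set.mem_singleton_iff] at ha1
      subst ha1
      exact Set.mem_union_right _ (by simp)
  have hLR : IsLeftTransversal H (S ∪ {1}) ↔ IsRightTransversal H (S ∪ {1}) := by
    constructor
    · intro hL g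
      obtain ⟨t, ⟨htT, htH⟩, huniq⟩ := hL g⁻¹
      refine ⟨t⁻¹, ⟨hTinv t htT, by simpa [mul_inv_rev] using H.inv_mem htH⟩, ?_⟩
      rintro s ⟨hsT, hsH⟩
      have := huniq s⁻¹ ⟨hTinv s hsT, by simpa [mul_inv_rev] using H.inv_mem hsH⟩
      rw [← this, inv_inv]
    · intro hR g
      obtain ⟨t, ⟨htT, htH⟩, huniq⟩ := hR g⁻¹
      refine ⟨t⁻¹, ⟨hTinv t htT, by simpa [mul_inv_rev] using H.inv_mem htH⟩, ?_⟩
      rintro s ⟨hsT, hsH⟩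
      have := huniq s⁻¹ ⟨hTinv s hsT, by simpa [mul_inv_rev] using H.inv_mem hsH⟩
      rw [← this, inv_inv]
  exact ⟨hPCL, hPCL.trans hLR⟩
end

section
/- Let G be a finite group and H a proper subgroup of G. If there exists an element x ∈ G \ H such that the right coset Hx is inverse-closed (i.e. (Hx)⁻¹ = Hx) and contains no involutions (no element g with g² = e and g ≠ e), then H is not a perfect code of G. -/
/-- If a proper subgroup `H` of a finite group `G` has a right coset `Hx` (with
`x ∉ H`) that is inverse-closed and contains no involutions, then `H` is not a
perfect code of `G`. -/
theorem not_perfect_code_of_inverse_closed_coset (G : Type*) [Group G] [Fintype G]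
    (H : Subgroup G) (hH : H ≠ ⊤) (x : G) (hx : x ∉ H)
    (hinv : ((fun h : G => h * x) '' (H : Set G))⁻¹ = (fun h : G => h * x) '' (H : Set G))
    (hno : ∀ g ∈ (fun h : G => h * x) '' (H : Set G), g ^ 2 = 1 → g = 1) :
    ¬ IsPerfectCodeOfGroup G (H : Set G) := by
  rintro ⟨S, hSinv, hS1, _hind, huniq⟩
  have hx' : x⁻¹ ∉ (H : Set G) := fun h => hx (by simpa using H.inv_mem h)
  obtain ⟨u, ⟨huH, hadj⟩, huu⟩ := huniq x⁻¹ hx'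
  rw [cayley, SimpleGraph.fromRel_adj] at hadj
  obtain ⟨hne, hS⟩ := hadj
  have hs : u * x ∈ S := by
    rcases hS with h | h
    · simpa using h
    · have h' : (u * x)⁻¹ ∈ S := by simpa [mul_inv_rev] using h
      rw [← hSinv]; simpa using h'
  have hsmem : u * x ∈ (fun h : G => h * x) '' (H : Set G) := ⟨u, huH, rfl⟩
  have hsinvmem : (u * x)⁻¹ ∈ (fun h : G => h * x) '' (H : Set G) := by
    rw [← hinv]; simpa using hsmem
  obtain ⟨u', hu'H, hu'x0⟩ := hsinvmem
  have hu'x : u' * x = (u * x)⁻¹ := hu'x0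
  have hsinvS : (u * x)⁻¹ ∈ S := by rw [← hSinv]; simpa using hs
  have hu'S : u' * x ∈ S := by rw [hu'x]; exact hsinvS
  have hne' : x⁻¹ ≠ u' := by
    intro h
    apply hS1
    have : u' * x = 1 := by rw [← h]; simp
    rwa [this] at hu'S
  have hadj' : (cayley G S).Adj x⁻¹ u' := by
    rw [cayley, SimpleGraph.fromRel_adj]
    exact ⟨hne', Or.inl (by simpa using hu'S)⟩
  have : u' = u := huu u' ⟨hu'H, hadj'⟩
  rw [this] at hu'x
  have hsq : (u * x) ^ 2 = 1 := by
    rw [pow_two]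
    nth_rewrite 2 [hu'x]
    group
  have := hno (u * x) hsmem hsq
  rw [this] at hs
  exact hS1 hs
end

section
/- Suppose G is a finite group with no elements of order 4. Then for every subgroup H of G there exists a right transversal T of H in G such that e ∈ T and T is inverse-closed (T⁻¹ = T). -/
section Helpers

section Aux
variable {G : Type*} [Group G] (H : Subgroup G)

/-- same double coset -/
def SameD (x y : G) : Prop := ∃ a ∈ H, ∃ b ∈ H, y = a * x * b

theorem sameD_refl (x : G) : SameD H x x := ⟨1, H.one_mem, 1, H.one_mem, by simp⟩

theorem sameD_symm {x y : G} (h : SameD H x y) : SameD H y x := by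
  obtain ⟨a, ha, b, hb, rfl⟩ := h
  exact ⟨a⁻¹, H.inv_mem ha, b⁻¹, H.inv_mem hb, by group⟩

theorem sameD_trans {x y z : G} (h : SameD H x y) (h' : SameD H y z) : SameD H x z := by
  obtain ⟨a, ha, b, hb, rfl⟩ := h
  obtain ⟨c, hc, d, hd, rfl⟩ := h'
  exact ⟨c * a, H.mul_mem hc ha, b * d, H.mul_mem hb hd, by group⟩

def dSetoid : Setoid G := ⟨SameD H, ⟨sameD_refl H, sameD_symm H, sameD_trans H⟩⟩

theorem sameD_inv {x y : G} (h : SameD H x y) : SameD H x⁻¹ y⁻¹ := by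
  obtain ⟨a, ha, b, hb, rfl⟩ := h
  exact ⟨b⁻¹, H.inv_mem hb, a⁻¹, H.inv_mem ha, by group⟩

end Aux

section Aux2
variable {G : Type*} [Group G] (H : Subgroup G)

/-- quotient by right cosets -/
abbrev QR := Quotient (QuotientGroup.rightRel H)
/-- quotient by double cosets -/
abbrev QD := Quotient (dSetoid H)

def mkR (x : G) : QR H := Quotient.mk _ x
def mkD (x : G) : QD H := Quotient.mk _ x

theorem mkR_eq_iff {x y : G} : mkR H x = mkR H y ↔ y * x⁻¹ ∈ H := by
  constructor
  · intro h
    exact (QuotientGroup.rightRel_apply).1 (Quotient.exact h)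
  · intro h
    exact Quotient.sound ((QuotientGroup.rightRel_apply).2 h)

theorem mkD_eq_iff {x y : G} : mkD H x = mkD H y ↔ SameD H x y := by
  constructor
  · intro h; exact Quotient.exact h
  · intro h; exact Quotient.sound h

/-- map from right-coset quotient to double-coset quotient -/
def Phi : QR H → QD H :=
  Quotient.lift (fun x => mkD H x) (by
    intro x y hxy
    have : y * x⁻¹ ∈ H := (QuotientGroup.rightRel_apply).1 hxy
    exact (mkD_eq_iff H).2 ⟨y * x⁻¹, this, 1, H.one_mem, by group⟩)

theorem Phi_mk (x : G) : Phi H (mkR H x) = mkD H x := rfl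

/-- inversion on double cosets -/
def invD : QD H → QD H :=
  Quotient.lift (fun x => mkD H x⁻¹) (by
    intro x y hxy
    exact (mkD_eq_iff H).2 (sameD_inv H hxy))

theorem invD_mk (x : G) : invD H (mkD H x) = mkD H x⁻¹ := rfl

theorem invD_invD (D : QD H) : invD H (invD H D) = D := by
  induction D using Quotient.inductionOn with
  | h x => show mkD H x⁻¹⁻¹ = mkD H x; rw [inv_inv]

end Aux2

section Aux3
variable {G : Type*} [Group G] (H : Subgroup G)

/-- any right coset meets the inverse of any right coset in the opposite double coset -/
theorem compat (q q' : QR H) (h : Phi H q' = invD H (Phi H q)) :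
    ∃ t : G, mkR H t = q ∧ mkR H t⁻¹ = q' := by
  induction q using Quotient.inductionOn with
  | h x =>
  induction q' using Quotient.inductionOn with
  | h y =>
  replace h : Phi H (mkR H y) = invD H (Phi H (mkR H x)) := h
  rw [Phi_mk, Phi_mk, invD_mk, mkD_eq_iff] at h
  obtain ⟨a, ha, b, hb, hyab⟩ := h
  refine ⟨b * x, ?_, ?_⟩
  · show mkR H (b * x) = mkR H x
    rw [mkR_eq_iff]
    have e : x * (b * x)⁻¹ = b⁻¹ := by group
    rw [e]; exact H.inv_mem hb
  · show mkR H (b * x)⁻¹ = mkR H y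
    rw [mkR_eq_iff]
    have e : y * (b * x)⁻¹⁻¹ = y * b * x := by group
    rw [e]
    have e2 : y * b * x = a⁻¹ := by
      have : x⁻¹ = a * y * b := hyab
      calc y * b * x = a⁻¹ * (a * y * b) * x := by group
        _ = a⁻¹ * x⁻¹ * x := by rw [← this]
        _ = a⁻¹ := by group
    rw [e2]; exact H.inv_mem ha

/-- in a group with no elements of order 4, if t² ∈ H then the right coset Ht contains
an involution -/
theorem exists_invol [Fintype G] (h4 : ∀ g : G, orderOf g ≠ 4) {t : G} (ht : t * t ∈ H) :
    ∃ s : G, s * t⁻¹ ∈ H ∧ s * s = 1 := by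
  have hsq : t ^ 2 = t * t := sq t
  have hm' : orderOf (t * t) = orderOf t / Nat.gcd (orderOf t) 2 := by
    rw [← hsq, orderOf_pow]
  have hnpos : 0 < orderOf t := orderOf_pos t
  have hmodd : orderOf (t * t) % 2 = 1 := by
    by_contra hcon
    have h2m : 2 ∣ orderOf (t * t) := by omega
    rcases Nat.even_or_odd (orderOf t) with he | ho
    · obtain ⟨j, hj⟩ := he
      have h2n : 2 ∣ orderOf t := ⟨j, by omega⟩
      have hg : Nat.gcd (orderOf t) 2 = 2 :=
        Nat.dvd_antisymm (Nat.gcd_dvd_right _ 2) (Nat.dvd_gcd h2n dvd_rfl)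
      rw [hg] at hm'
      have h4n : 4 ∣ orderOf t := by omega
      obtain ⟨c, hc⟩ := h4n
      have hcpos : 0 < c := by omega
      have : orderOf (t ^ c) = 4 := by
        have hcd : c ∣ orderOf t := ⟨4, by omega⟩
        have hg2 : Nat.gcd (orderOf t) c = c :=
          Nat.dvd_antisymm (Nat.gcd_dvd_right _ c) (Nat.dvd_gcd hcd dvd_rfl)
        rw [orderOf_pow, hg2, hc, Nat.mul_div_cancel _ hcpos]
      exact h4 _ this
    · have h2n : ¬ 2 ∣ orderOf t := by
        exact Nat.two_dvd_ne_zero.mpr (Nat.odd_iff.1 ho)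
      have hg : Nat.gcd (orderOf t) 2 = 1 := by
        have hd := Nat.gcd_dvd_right (orderOf t) 2
        have hd' := Nat.gcd_dvd_left (orderOf t) 2
        rcases (Nat.dvd_prime Nat.prime_two).1 hd with h1 | h1
        · exact h1
        · exact absurd (h1 ▸ hd') h2n
      rw [hg, Nat.div_one] at hm'
      obtain ⟨k, hk⟩ := h2m
      exact h2n ⟨k, by omega⟩
  refine ⟨(t ^ orderOf (t * t))⁻¹, ?_, ?_⟩
  · have h1 : (t ^ orderOf (t * t))⁻¹ * t⁻¹ = (t ^ (orderOf (t * t) + 1))⁻¹ := by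
      rw [pow_succ', mul_inv_rev]
    have h2 : t ^ (orderOf (t * t) + 1) = (t * t) ^ ((orderOf (t * t) + 1) / 2) := by
      conv_rhs => rw [← hsq]
      rw [← pow_mul]
      congr 1
      have hoo : orderOf (t ^ 2) = orderOf (t * t) := by rw [hsq]
      rw [hoo]
      omega
    rw [h1, h2]
    exact H.inv_mem (H.pow_mem ht _)
  · have h3 : (t ^ orderOf (t * t))⁻¹ * (t ^ orderOf (t * t))⁻¹ =
        ((t * t) ^ orderOf (t * t))⁻¹ := by
      rw [← mul_inv_rev, ← pow_add, ← two_mul, pow_mul, hsq]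
    rw [h3, pow_orderOf_eq_one, inv_one]

end Aux3

section Aux4
variable {G : Type*} [Group G] (H : Subgroup G)

noncomputable def fiberEquiv (x : G) :
    {y : G // SameD H x y} ≃ {q : QR H // Phi H q = mkD H x} × H := by
  classical
  let f : {y : G // SameD H x y} → {q : QR H // Phi H q = mkD H x} := fun y =>
    ⟨mkR H y.1, by rw [Phi_mk, mkD_eq_iff]; exact sameD_symm H y.2⟩
  refine ((Equiv.sigmaFiberEquiv f).symm.trans ?_).trans
    (Equiv.sigmaEquivProd {q : QR H // Phi H q = mkD H x} H)
  refine Equiv.sigmaCongrRight (fun q => ?_)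
  set z : G := Quotient.out q.1 with hzdef
  have hz : mkR H z = q.1 := Quotient.out_eq _
  have hzx : SameD H x z := by
    have h0 : Phi H (mkR H z) = mkD H x := by rw [hz]; exact q.2
    rw [Phi_mk, mkD_eq_iff] at h0
    exact sameD_symm H h0
  refine ⟨fun y => ⟨y.1.1 * z⁻¹, ?_⟩, fun h => ⟨⟨h.1 * z, ?_⟩, ?_⟩, ?_, ?_⟩
  · -- y.1.1 * z⁻¹ ∈ H
    have h1 : mkR H y.1.1 = q.1 := congrArg Subtype.val y.2
    have h2 : mkR H z = mkR H y.1.1 := by rw [hz, h1]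
    rw [mkR_eq_iff] at h2
    exact h2
  · -- SameD x (h * z)
    exact sameD_trans H hzx ⟨h.1, h.2, 1, H.one_mem, by group⟩
  · -- f ⟨h*z, _⟩ = q
    refine Subtype.ext ?_
    show mkR H (h.1 * z) = q.1
    rw [← hz, mkR_eq_iff]
    have e : z * (h.1 * z)⁻¹ = h.1⁻¹ := by group
    rw [e]; exact H.inv_mem h.2
  · intro y
    refine Subtype.ext (Subtype.ext ?_)
    show y.1.1 * z⁻¹ * z = y.1.1
    group
  · intro h
    refine Subtype.ext ?_
    show h.1 * z * z⁻¹ = h.1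
    group

noncomputable def invSameDEquiv (x : G) :
    {y : G // SameD H x y} ≃ {y : G // SameD H x⁻¹ y} where
  toFun y := ⟨y.1⁻¹, sameD_inv H y.2⟩
  invFun y := ⟨y.1⁻¹, by have := sameD_inv H y.2; rwa [inv_inv] at this⟩
  left_inv y := Subtype.ext (inv_inv _)
  right_inv y := Subtype.ext (inv_inv _)

theorem card_fiber_eq [Fintype G] (x : G) :
    Nat.card {q : QR H // Phi H q = mkD H x} = Nat.card {q : QR H // Phi H q = mkD H x⁻¹} := by
  have h1 := Nat.card_congr ((fiberEquiv H x).symm.trans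
    ((invSameDEquiv H x).trans (fiberEquiv H x⁻¹)))
  rw [Nat.card_prod, Nat.card_prod] at h1
  have hpos : 0 < Nat.card H := Nat.card_pos
  exact Nat.eq_of_mul_eq_mul_right hpos h1

end Aux4

section Pairing
variable {Q I : Type*} [DecidableEq I]

theorem pairing (Φ : Q → I) (inv : I → I) (hinv : ∀ D, inv (inv D) = D) :
    ∀ (n : ℕ) (s : Finset Q), s.card ≤ n →
      (∀ D : I, (s.filter (fun q => Φ q = D)).card = (s.filter (fun q => Φ q = inv D)).card) →
      ∃ σ : Q → Q, ∀ q ∈ s, σ q ∈ s ∧ σ (σ q) = q ∧ Φ (σ q) = inv (Φ q) := by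
  classical
  intro n
  induction n with
  | zero =>
    intro s hcard _
    refine ⟨id, fun q hq => absurd hq ?_⟩
    have : s = ∅ := Finset.card_eq_zero.1 (Nat.le_zero.1 hcard)
    simp [this]
  | succ n ih =>
    intro s hcard hbal
    rcases s.eq_empty_or_nonempty with rfl | ⟨q, hq⟩
    · exact ⟨id, by simp⟩
    by_cases hD : inv (Φ q) = Φ q
    · -- self-paired double coset: remove q alone
      have hbal' : ∀ D : I, ((s.erase q).filter (fun z => Φ z = D)).card =
          ((s.erase q).filter (fun z => Φ z = inv D)).card := by
        intro D
        rw [Finset.filter_erase, Finset.filter_erase]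
        by_cases hqD : Φ q = D
        · have hqD' : Φ q = inv D := by rw [← hqD]; exact hD.symm
          rw [Finset.card_erase_of_mem (Finset.mem_filter.2 ⟨hq, hqD⟩),
            Finset.card_erase_of_mem (Finset.mem_filter.2 ⟨hq, hqD'⟩), hbal D]
        · have hqD' : ¬ Φ q = inv D := by
            intro hcon
            apply hqD
            have h5 := congrArg inv hcon
            rw [hinv] at h5
            rw [← h5]
            exact hD.symm
          have hnm1 : q ∉ s.filter (fun z => Φ z = D) :=
            fun hmem => hqD (Finset.mem_filter.1 hmem).2
          have hnm2 : q ∉ s.filter (fun z => Φ z = inv D) :=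
            fun hmem => hqD' (Finset.mem_filter.1 hmem).2
          rw [Finset.erase_eq_of_notMem hnm1, Finset.erase_eq_of_notMem hnm2, hbal D]
      obtain ⟨σ', hσ'⟩ := ih (s.erase q)
        (by have := Finset.card_erase_of_mem hq; omega) hbal'
      refine ⟨fun z => if z = q then q else σ' z, fun z hz => ?_⟩
      by_cases hzq : z = q
      · subst hzq
        simp only [if_pos rfl]
        exact ⟨hz, by simp, hD.symm⟩
      · have hz' : z ∈ s.erase q := Finset.mem_erase.2 ⟨hzq, hz⟩
        obtain ⟨hm, hinvol, hphi⟩ := hσ' z hz'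
        have hne : σ' z ≠ q := (Finset.mem_erase.1 hm).1
        simp only [if_neg hzq, if_neg hne]
        exact ⟨Finset.mem_of_mem_erase hm, by rw [hinvol], hphi⟩
    · -- q's double coset is not self-paired: find a partner q'
      have hmemq : q ∈ s.filter (fun z => Φ z = Φ q) := Finset.mem_filter.2 ⟨hq, rfl⟩
      have hpos : 0 < (s.filter (fun z => Φ z = inv (Φ q))).card := by
        rw [← hbal (Φ q)]
        exact Finset.card_pos.2 ⟨q, hmemq⟩
      obtain ⟨q', hq'mem⟩ := Finset.card_pos.1 hpos
      obtain ⟨hq's, hq'phi⟩ := Finset.mem_filter.1 hq'mem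
      have hqq' : q' ≠ q := by
        intro hcon
        rw [hcon] at hq'phi
        exact hD hq'phi.symm
      set s' := (s.erase q).erase q' with hs'
      have hq'e : q' ∈ s.erase q := Finset.mem_erase.2 ⟨hqq', hq's⟩
      have hbal' : ∀ D : I, (s'.filter (fun z => Φ z = D)).card =
          (s'.filter (fun z => Φ z = inv D)).card := by
        intro D
        rw [hs', Finset.filter_erase, Finset.filter_erase, Finset.filter_erase,
          Finset.filter_erase]
        by_cases hDP : D = Φ q
        · have hql : q ∈ s.filter (fun z => Φ z = D) := Finset.mem_filter.2 ⟨hq, hDP.symm⟩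
          have hq'l : q' ∉ (s.filter (fun z => Φ z = D)).erase q := by
            intro hmem
            have h5 := (Finset.mem_filter.1 (Finset.mem_of_mem_erase hmem)).2
            rw [hDP] at h5
            rw [h5] at hq'phi
            exact hD hq'phi.symm
          have hq'r : q' ∈ s.filter (fun z => Φ z = inv D) :=
            Finset.mem_filter.2 ⟨hq's, by rw [hq'phi, hDP]⟩
          have hqr : q ∉ s.filter (fun z => Φ z = inv D) := by
            intro hmem
            have h5 := (Finset.mem_filter.1 hmem).2
            rw [hDP] at h5
            exact hD h5.symm
          rw [Finset.erase_eq_of_notMem hq'l, Finset.card_erase_of_mem hql,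
            Finset.erase_eq_of_notMem hqr, Finset.card_erase_of_mem hq'r, hbal D]
        · by_cases hDP' : D = inv (Φ q)
          · have hql' : q ∉ s.filter (fun z => Φ z = D) := by
              intro hmem
              exact hDP ((Finset.mem_filter.1 hmem).2).symm
            have hq'l : q' ∈ s.filter (fun z => Φ z = D) :=
              Finset.mem_filter.2 ⟨hq's, by rw [hq'phi, hDP']⟩
            have hinvD : inv D = Φ q := by rw [hDP', hinv]
            have hqr : q ∈ s.filter (fun z => Φ z = inv D) :=
              Finset.mem_filter.2 ⟨hq, hinvD.symm⟩
            have hq'r : q' ∉ (s.filter (fun z => Φ z = inv D)).erase q := by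
              intro hmem
              have h5 := (Finset.mem_filter.1 (Finset.mem_of_mem_erase hmem)).2
              rw [hinvD] at h5
              rw [h5] at hq'phi
              exact hD hq'phi.symm
            rw [Finset.erase_eq_of_notMem hql', Finset.card_erase_of_mem hq'l,
              Finset.erase_eq_of_notMem hq'r, Finset.card_erase_of_mem hqr, hbal D]
          · have h1 : q ∉ s.filter (fun z => Φ z = D) := by
              intro hmem
              exact hDP ((Finset.mem_filter.1 hmem).2).symm
            have h2 : q' ∉ s.filter (fun z => Φ z = D) := by
              intro hmem
              apply hDP'
              have h5 := (Finset.mem_filter.1 hmem).2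
              rw [← h5]
              exact hq'phi
            have h3 : q ∉ s.filter (fun z => Φ z = inv D) := by
              intro hmem
              apply hDP'
              have h5 := (Finset.mem_filter.1 hmem).2
              have h6 := congrArg inv h5
              rw [hinv] at h6
              rw [← h6]
            have h4 : q' ∉ s.filter (fun z => Φ z = inv D) := by
              intro hmem
              apply hDP
              have h5 := (Finset.mem_filter.1 hmem).2
              rw [hq'phi] at h5
              have h6 := congrArg inv h5
              rw [hinv, hinv] at h6
              rw [h6]
            rw [Finset.erase_eq_of_notMem h1, Finset.erase_eq_of_notMem h2,
              Finset.erase_eq_of_notMem h3, Finset.erase_eq_of_notMem h4, hbal D]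
      have hcard' : s'.card ≤ n := by
        rw [hs']
        have h1 := Finset.card_erase_of_mem hq
        have h2 := Finset.card_erase_of_mem hq'e
        omega
      obtain ⟨σ', hσ'⟩ := ih s' hcard' hbal'
      refine ⟨fun z => if z = q then q' else if z = q' then q else σ' z, fun z hz => ?_⟩
      by_cases hzq : z = q
      · subst hzq
        simp only [if_pos rfl, if_neg hqq']
        exact ⟨hq's, by simp, hq'phi⟩
      · by_cases hzq' : z = q'
        · subst hzq'
          simp only [if_neg hzq, if_pos rfl]
          refine ⟨hq, by simp, ?_⟩
          have h6 := congrArg inv hq'phi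
          rw [hinv] at h6
          exact h6.symm
        · have hz' : z ∈ s' := Finset.mem_erase.2 ⟨hzq', Finset.mem_erase.2 ⟨hzq, hz⟩⟩
          obtain ⟨hm, hinvol, hphi⟩ := hσ' z hz'
          have hne1 : σ' z ≠ q' := (Finset.mem_erase.1 hm).1
          have hne2 : σ' z ≠ q := (Finset.mem_erase.1 (Finset.mem_of_mem_erase hm)).1
          simp only [if_neg hzq, if_neg hzq', if_neg hne2, if_neg hne1]
          exact ⟨Finset.mem_of_mem_erase (Finset.mem_of_mem_erase hm), hinvol, hphi⟩

end Pairing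

theorem exists_inverse_closed_transversal' (G : Type*) [Group G] [Fintype G]
    (h4 : ∀ g : G, orderOf g ≠ 4) (H : Subgroup G) :
    ∃ T : Set G, (∀ g : G, ∃! t, t ∈ T ∧ t * g⁻¹ ∈ H) ∧ (1 : G) ∈ T ∧ T⁻¹ = T := by
  classical
  haveI : Finite (QR H) := Quotient.finite _
  haveI : Fintype (QR H) := Fintype.ofFinite _
  -- balance of fibers
  have hbal : ∀ D : QD H,
      (Finset.univ.filter (fun q : QR H => Phi H q = D)).card =
      (Finset.univ.filter (fun q : QR H => Phi H q = invD H D)).card := by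
    intro D
    induction D using Quotient.inductionOn with
    | h x =>
    have e1 : ∀ (D' : QD H), (Finset.univ.filter (fun q : QR H => Phi H q = D')).card =
        Nat.card {q : QR H // Phi H q = D'} := by
      intro D'
      rw [Nat.card_eq_fintype_card, Fintype.card_subtype]
    have hD : (Quotient.mk (dSetoid H) x) = mkD H x := rfl
    rw [hD, e1, e1, invD_mk, card_fiber_eq]
  -- the pairing involution on right cosets
  obtain ⟨σ, hσ⟩ := pairing (Phi H) (invD H) (invD_invD H) (Finset.univ.card)
    Finset.univ le_rfl hbal
  have hσinv : ∀ q : QR H, σ (σ q) = q := fun q => (hσ q (Finset.mem_univ q)).2.1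
  have hσphi : ∀ q : QR H, Phi H (σ q) = invD H (Phi H q) :=
    fun q => (hσ q (Finset.mem_univ q)).2.2
  -- σ fixes the coset of 1
  have hσ1 : σ (mkR H 1) = mkR H 1 := by
    obtain ⟨t, ht1, ht2⟩ := compat H (mkR H 1) (σ (mkR H 1)) (hσphi _)
    have htH : t⁻¹ ∈ H := by
      rw [mkR_eq_iff] at ht1
      simpa using ht1
    rw [← ht2, mkR_eq_iff]
    simpa using H.inv_mem htH
  -- choosing good representatives
  have spec : ∀ q : QR H, ∃ t : G, mkR H t = q ∧ mkR H t⁻¹ = σ q ∧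
      (σ q = q → t * t = 1) ∧ (q = mkR H 1 → t = 1) := by
    intro q
    by_cases h1 : q = mkR H 1
    · subst h1
      exact ⟨1, rfl, by rw [inv_one, hσ1], fun _ => by rw [one_mul], fun _ => rfl⟩
    · obtain ⟨t, ht1, ht2⟩ := compat H q (σ q) (hσphi q)
      by_cases hself : σ q = q
      · have hsq : t * t ∈ H := by
          have : mkR H t = mkR H t⁻¹ := by rw [ht1, ht2, hself]
          rw [mkR_eq_iff] at this
          have h5 : ((t * t)⁻¹ : G) ∈ H := by
            have e : (t * t)⁻¹ = t⁻¹ * t⁻¹ := by group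
            rw [e]; exact this
          simpa using H.inv_mem h5
        obtain ⟨s, hs1, hs2⟩ := exists_invol H h4 hsq
        have hmk : mkR H s = q := by
          rw [← ht1]
          exact ((mkR_eq_iff H).2 hs1).symm
        have hsinv : s⁻¹ = s := by
          rw [inv_eq_iff_mul_eq_one]
          exact hs2
        exact ⟨s, hmk, by rw [hsinv, hmk, hself], fun _ => hs2, fun hc => absurd hc h1⟩
      · exact ⟨t, ht1, ht2, fun hc => absurd hc hself, fun hc => absurd hc h1⟩
  choose pick hpick1 hpick2 hpick3 hpick4 using spec
  -- injective numbering to break ties between paired cosets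
  obtain ⟨ι, hι⟩ := Countable.exists_injective_nat (QR H)
  set rep : QR H → G := fun q => if ι q ≤ ι (σ q) then pick q else (pick (σ q))⁻¹ with hrep
  have hrep_mk : ∀ q, mkR H (rep q) = q := by
    intro q
    rw [hrep]
    by_cases h : ι q ≤ ι (σ q)
    · simp only [if_pos h]; exact hpick1 q
    · simp only [if_neg h]
      rw [hpick2 (σ q), hσinv]
  have hrep1 : rep (mkR H 1) = 1 := by
    rw [hrep]
    simp only [hσ1, le_refl, if_pos]
    exact hpick4 _ rfl
  have hrep_inv : ∀ q, (rep q)⁻¹ = rep (σ q) := by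
    intro q
    by_cases hself : σ q = q
    · rw [hself, hrep]
      simp only [hself, le_refl, if_pos]
      rw [inv_eq_iff_mul_eq_one]
      exact hpick3 q hself
    · have hne : ι q ≠ ι (σ q) := fun hc => hself (hι hc).symm
      rcases lt_or_gt_of_ne hne with hlt | hgt
      · have h1 : ι q ≤ ι (σ q) := le_of_lt hlt
        have h2 : ¬ ι (σ q) ≤ ι q := by omega
        rw [hrep]
        simp only [if_pos h1, hσinv, if_neg h2]
      · have h1 : ¬ ι q ≤ ι (σ q) := by omega
        have h2 : ι (σ q) ≤ ι q := by omega
        rw [hrep]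
        simp only [if_neg h1, hσinv, if_pos h2, inv_inv]
  refine ⟨Set.range rep, ?_, ⟨mkR H 1, hrep1⟩, ?_⟩
  · -- transversal property
    intro g
    refine ⟨rep (mkR H g), ⟨⟨mkR H g, rfl⟩, ?_⟩, ?_⟩
    · exact (mkR_eq_iff H).1 (hrep_mk (mkR H g)).symm
    · rintro t' ⟨⟨q', rfl⟩, ht'H⟩
      have h6 : mkR H g = mkR H (rep q') := (mkR_eq_iff H).2 ht'H
      rw [hrep_mk q'] at h6
      rw [← h6]
  · -- inverse-closed
    ext g
    simp only [Set.mem_inv, Set.mem_range]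
    constructor
    · rintro ⟨q, hq⟩
      refine ⟨σ q, ?_⟩
      rw [← hrep_inv, hq, inv_inv]
    · rintro ⟨q, hq⟩
      refine ⟨σ q, ?_⟩
      rw [← hrep_inv, hq]


end Helpers

/-- If a finite group `G` has no elements of order 4, then every subgroup of `G` has a
right transversal containing `1` which is inverse-closed. -/
theorem exists_inverse_closed_transversal (G : Type*) [Group G] [Fintype G]
    (h4 : ∀ g : G, orderOf g ≠ 4) (H : Subgroup G) :
    ∃ T : Set G, IsRightTransversal H T ∧ (1 : G) ∈ T ∧ T⁻¹ = T := by
  obtain ⟨T, h1, h2, h3⟩ := exists_inverse_closed_transversal' G h4 H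
  exact ⟨T, h1, h2, h3⟩
end

section
/- Let G be a finite group and H a subgroup of G. If H has a complement in G, that is, a subgroup K of G with G = HK and H ∩ K = {e}, then H is a perfect code of G. -/
open scoped Pointwise in
/-- If a subgroup `H` of a finite group `G` has a complement `K` (i.e. `G = HK` and
`H ∩ K = {1}`), then `H` is a perfect code of `G`. -/
theorem perfect_code_of_complement (G : Type*) [Group G] [Fintype G]
    (H : Subgroup G)
    (hcomp : ∃ K : Subgroup G, (H : Set G) * (K : Set G) = Set.univ ∧ H ⊓ K = ⊥) :
    IsPerfectCodeOfGroup G (H : Set G) := by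
  obtain ⟨K, hHK, hbot⟩ := hcomp
  have key : ∀ x : G, x ∈ H → x ∈ K → x = 1 := by
    intro x hH hK
    have hx : x ∈ H ⊓ K := ⟨hH, hK⟩
    rw [hbot] at hx
    exact hx
  refine ⟨(K : Set G) \ {1}, ?_, by simp, ?_, ?_⟩
  · ext x
    simp [Set.mem_inv]
  · -- independence
    intro u hu v hv hadj
    rw [cayley, SimpleGraph.fromRel_adj] at hadj
    obtain ⟨hne, hor⟩ := hadj
    rcases hor with ⟨hK, h1⟩ | ⟨hK, h1⟩
    · exact h1 (key _ (H.mul_mem hv (H.inv_mem hu)) hK)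
    · exact h1 (key _ (H.mul_mem hu (H.inv_mem hv)) hK)
  · -- every vertex not in H is adjacent to exactly one vertex of H
    intro v hv
    have hv' : v⁻¹ ∈ (H : Set G) * (K : Set G) := by rw [hHK]; trivial
    obtain ⟨h, hh, k, hk, heq⟩ := hv'
    have hvk : v * h = k⁻¹ := by
      have : v = k⁻¹ * h⁻¹ := by
        rw [← inv_inv v, ← heq]; group
      rw [this]; group
    have hk1 : k ≠ 1 := by
      intro hk1
      apply hv
      have : v = h⁻¹ := by
        rw [← inv_inv v, ← heq, hk1]; simp
      rw [this]; exact H.inv_mem hh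
    refine ⟨h⁻¹, ⟨H.inv_mem hh, ?_⟩, ?_⟩
    · rw [cayley, SimpleGraph.fromRel_adj]
      constructor
      · intro hE; exact hv (hE ▸ H.inv_mem hh)
      · left
        refine ⟨?_, ?_⟩
        · show h⁻¹ * v⁻¹ ∈ (K : Set G)
          have : h⁻¹ * v⁻¹ = (v * h)⁻¹ := by group
          rw [this, hvk]
          exact K.inv_mem (K.inv_mem hk)
        · simp only [Set.mem_singleton_iff]
          intro hE
          have hvh1 : v * h = 1 := by
            have hv'2 : v * h = (h⁻¹ * v⁻¹)⁻¹ := by group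
            rw [hv'2, hE, inv_one]
          exact hk1 (by rw [hvk] at hvh1; simpa using hvh1)
      
    · intro u ⟨hu, hadj⟩
      rw [cayley, SimpleGraph.fromRel_adj] at hadj
      obtain ⟨hne, hor⟩ := hadj
      have huvK : u * v⁻¹ ∈ K := by
        rcases hor with ⟨hK, _⟩ | ⟨hK, _⟩
        · exact hK
        · have := K.inv_mem hK
          simpa using this
      have huh : u * h ∈ K := by
        have : u * h = (u * v⁻¹) * (v * h) := by group
        rw [this, hvk]
        exact K.mul_mem huvK (K.inv_mem hk)
      have : u * h = 1 := key _ (H.mul_mem hu hh) huh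
      exact eq_inv_of_mul_eq_one_left this
end

section
/- Let G be a finite cyclic group and H a proper subgroup of G. Then H is a perfect code of G if and only if either the order |H| of H is odd or the index [G : H] is odd. -/
/-- Sufficiency criterion: an "index set" of exponents giving a symmetric transversal. -/
lemma code_of_index_set {G : Type*} [Group G] (g : G) (H : Subgroup G) (k : ℕ)
    (hmem : ∀ a : ℤ, g ^ a ∈ H ↔ (k : ℤ) ∣ a)
    (hgen : ∀ x : G, ∃ a : ℤ, g ^ a = x)
    (I : Set ℤ)
    (hinv : ∀ i ∈ I, ∃ j ∈ I, g ^ (-i) = g ^ j)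
    (hb : ∀ i ∈ I, ¬ (k : ℤ) ∣ i)
    (hex : ∀ a : ℤ, ¬ (k : ℤ) ∣ a → ∃ i ∈ I, (k : ℤ) ∣ a + i)
    (hun : ∀ i ∈ I, ∀ j ∈ I, (k : ℤ) ∣ i - j → g ^ i = g ^ j) :
    IsPerfectCodeOfGroup G (H : Set G) := by
  set S : Set G := {x | ∃ i ∈ I, g ^ i = x} with hS
  have hmemS : ∀ x ∈ S, x⁻¹ ∈ S := by
    rintro x ⟨i, hi, rfl⟩
    obtain ⟨j, hj, hji⟩ := hinv i hi
    exact ⟨j, hj, by rw [← hji, zpow_neg]⟩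
  have h1S : (1 : G) ∉ S := by
    rintro ⟨i, hi, h1⟩
    exact hb i hi ((hmem i).mp (h1 ▸ H.one_mem))
  refine ⟨S, ?_, h1S, ?_, ?_⟩
  · ext x
    constructor
    · intro hx
      have : x⁻¹ ∈ S := Set.mem_inv.mp hx
      simpa using hmemS _ this
    · intro hx
      exact Set.mem_inv.mpr (hmemS x hx)
  · -- independence
    intro u hu v hv hadj
    rw [cayley, SimpleGraph.fromRel_adj] at hadj
    obtain ⟨hne, hcase | hcase⟩ := hadj
    · obtain ⟨i, hi, hig⟩ := hcase
      exact hb i hi ((hmem i).mp (hig ▸ H.mul_mem hv (H.inv_mem hu)))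
    · obtain ⟨i, hi, hig⟩ := hcase
      exact hb i hi ((hmem i).mp (hig ▸ H.mul_mem hu (H.inv_mem hv)))
  · -- every vertex outside H has a unique neighbour in H
    intro v hv
    obtain ⟨a, rfl⟩ := hgen v
    have hka : ¬ (k : ℤ) ∣ a := fun h => hv ((hmem a).mpr h)
    obtain ⟨i, hiI, hdvd⟩ := hex a hka
    have hiH : g ^ (a + i) ∈ H := (hmem _).mpr hdvd
    have key : ∀ j ∈ I, (k : ℤ) ∣ j + a → g ^ (j + a) = g ^ (a + i) := by
      intro j hjI hj
      have : (k : ℤ) ∣ j - i := by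
        have := dvd_sub hj hdvd
        simpa [sub_sub_cancel, show j + a - (a + i) = j - i by ring] using this
      have := hun j hjI i hiI this
      rw [zpow_add, zpow_add, this, zpow_mul_comm]
    refine ⟨g ^ (a + i), ⟨hiH, ?_⟩, ?_⟩
    · rw [cayley, SimpleGraph.fromRel_adj]
      constructor
      · intro heq
        have : g ^ i = (1 : G) := by
          have : g ^ a * g ^ i = g ^ a * 1 := by
            rw [mul_one, ← zpow_add, ← heq]
          exact mul_left_cancel this
        exact h1S (this ▸ ⟨i, hiI, rfl⟩)
      · left
        refine ⟨i, hiI, ?_⟩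
        rw [← zpow_sub, add_sub_cancel_left]
    · rintro u ⟨huH, hadj⟩
      rw [cayley, SimpleGraph.fromRel_adj] at hadj
      obtain ⟨hne, hcase | hcase⟩ := hadj
      · obtain ⟨j, hjI, hj⟩ := hcase
        have hu : u = g ^ (j + a) := by
          rw [zpow_add, hj]
          group
        have : (k : ℤ) ∣ j + a := (hmem _).mp (hu ▸ huH)
        rw [hu]; exact key j hjI this
      · obtain ⟨j, hjI, hj⟩ := hcase
        obtain ⟨j', hj'I, hjj'⟩ := hinv j hjI
        have hu : u = g ^ (j' + a) := by
          have : u = g ^ (-j) * g ^ a := by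
            rw [zpow_neg, hj]; group
          rw [this, hjj', ← zpow_add]
        have : (k : ℤ) ∣ j' + a := (hmem _).mp (hu ▸ huH)
        rw [hu]; exact key j' hj'I this

/-- A proper subgroup `H` of a finite cyclic group `G` is a perfect code of `G` iff
`|H|` is odd or `[G : H]` is odd. -/
theorem cyclic_perfect_code_iff (G : Type*) [Group G] [Fintype G] (hc : IsCyclic G)
    (H : Subgroup G) (hH : H ≠ ⊤) :
    IsPerfectCodeOfGroup G (H : Set G) ↔ Odd (Nat.card H) ∨ Odd H.index := by
  obtain ⟨g, hg⟩ := hc.exists_generator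
  have hgen : ∀ x : G, ∃ a : ℤ, g ^ a = x := fun x => Subgroup.mem_zpowers_iff.mp (hg x)
  haveI hnorm : H.Normal := by
    constructor
    intro h hh x
    obtain ⟨a, rfl⟩ := hgen x
    obtain ⟨b, rfl⟩ := hgen h
    have : g ^ a * g ^ b * (g ^ a)⁻¹ = g ^ b := by group
    rwa [this]
  set k := H.index with hkdef
  set m := Nat.card H with hmdef
  have hk0 : k ≠ 0 := Subgroup.index_ne_zero_of_finite
  have hm0 : m ≠ 0 := Nat.card_pos.ne'
  have hmk : m * k = Nat.card G := H.card_mul_index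
  have hordg : orderOf g = Nat.card G := orderOf_eq_card_of_forall_mem_zpowers hg
  have hone : ∀ a : ℤ, g ^ a = 1 ↔ ((m * k : ℕ) : ℤ) ∣ a := by
    intro a
    rw [← orderOf_dvd_iff_zpow_eq_one, hordg, hmk]
  -- membership in H in terms of exponents
  have hmem : ∀ a : ℤ, g ^ a ∈ H ↔ (k : ℤ) ∣ a := by
    have hqgen : ∀ x : G ⧸ H, ∃ a : ℤ, ((g : G ⧸ H)) ^ a = x := by
      intro x
      obtain ⟨y, rfl⟩ := QuotientGroup.mk_surjective x
      obtain ⟨a, rfl⟩ := hgen y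
      exact ⟨a, (QuotientGroup.mk_zpow H g a).symm⟩
    have horder : orderOf ((g : G ⧸ H)) = k := by
      have htop : Subgroup.zpowers ((g : G ⧸ H)) = ⊤ := by
        rw [Subgroup.eq_top_iff']
        intro x
        exact Subgroup.mem_zpowers_iff.mpr (hqgen x)
      have h1 := Nat.card_zpowers ((g : G ⧸ H))
      rw [htop, Subgroup.card_top] at h1
      rw [← h1, hkdef, Subgroup.index_eq_card]
    intro a
    rw [← QuotientGroup.eq_one_iff (g ^ a), QuotientGroup.mk_zpow, ← horder,
      orderOf_dvd_iff_zpow_eq_one]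
  constructor
  · -- necessity
    intro hcode
    by_contra hpar
    push_neg at hpar
    obtain ⟨hm, hk⟩ := hpar
    rw [Nat.not_odd_iff_even] at hm hk
    obtain ⟨t, ht⟩ := hm
    obtain ⟨c, hcc⟩ := hk
    have hc1 : 1 ≤ c := by omega
    obtain ⟨S, hSinv, hS1, hind, huniq⟩ := hcode
    have hinvS : ∀ x ∈ S, x⁻¹ ∈ S := by
      intro x hx
      have : x⁻¹ ∈ S⁻¹ := Set.inv_mem_inv.mpr hx
      rwa [hSinv] at this
    have hkc : (k : ℤ) = 2 * (c : ℤ) := by push_cast [hcc]; ring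
    have hv : g ^ (c : ℤ) ∉ H := by
      rw [hmem]
      rintro ⟨s, hs⟩
      rw [hkc] at hs
      have hz : (c : ℤ) * (2 * s - 1) = 0 := by linear_combination -hs
      rcases mul_eq_zero.mp hz with h | h
      · omega
      · omega
    obtain ⟨u, ⟨huH, hadj⟩, huni⟩ := huniq _ hv
    obtain ⟨b, rfl⟩ := hgen u
    have hbd : (k : ℤ) ∣ b := (hmem b).mp huH
    rw [cayley, SimpleGraph.fromRel_adj] at hadj
    obtain ⟨hne, hcase⟩ := hadj
    have hs1 : g ^ (b - (c : ℤ)) ∈ S := by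
      rcases hcase with h | h
      · rwa [← zpow_sub] at h
      · rw [← zpow_sub] at h
        have := hinvS _ h
        rwa [← zpow_neg, neg_sub] at this
    have hwH : g ^ ((k : ℤ) - b) ∈ H := (hmem _).mpr (dvd_sub dvd_rfl hbd)
    have hwv : g ^ ((k : ℤ) - b) * (g ^ (c : ℤ))⁻¹ = (g ^ (b - (c : ℤ)))⁻¹ := by
      rw [← zpow_sub, ← zpow_neg]
      congr 1
      rw [hkc]; ring
    have hwS : g ^ ((k : ℤ) - b) * (g ^ (c : ℤ))⁻¹ ∈ S := by
      rw [hwv]; exact hinvS _ hs1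
    have hadjw : (cayley G S).Adj (g ^ (c : ℤ)) (g ^ ((k : ℤ) - b)) := by
      rw [cayley, SimpleGraph.fromRel_adj]
      refine ⟨?_, Or.inl hwS⟩
      intro heq
      apply hS1
      have : g ^ ((k : ℤ) - b) * (g ^ (c : ℤ))⁻¹ = 1 := by
        rw [← heq]; group
      rwa [this] at hwS
    have hwu : g ^ ((k : ℤ) - b) = g ^ b := huni _ ⟨hwH, hadjw⟩
    have h1 : g ^ ((k : ℤ) - 2 * b) = 1 := by
      have : g ^ ((k : ℤ) - 2 * b) = g ^ ((k : ℤ) - b) * (g ^ b)⁻¹ := by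
        rw [← zpow_sub]; congr 1; ring
      rw [this, hwu]; group
    rw [hone] at h1
    obtain ⟨s, hs⟩ := hbd
    obtain ⟨w, hw⟩ := h1
    rw [hs] at hw
    have hz : (c : ℤ) * (2 - 4 * s - 4 * (t : ℤ) * w) = 0 := by
      have hmz : (m : ℤ) = 2 * (t : ℤ) := by push_cast [ht]; ring
      have : ((m * k : ℕ) : ℤ) = (m : ℤ) * (k : ℤ) := by push_cast; ring
      rw [this, hmz, hkc] at hw
      linear_combination hw
    rcases mul_eq_zero.mp hz with h | h
    · omega
    · obtain ⟨z, hzz⟩ : ∃ z : ℤ, (t : ℤ) * w = z := ⟨_, rfl⟩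
      have h2 : 2 - 4 * s - 4 * z = 0 := by rw [← hzz]; linear_combination h
      omega
  · -- sufficiency
    have oddk : Odd k → IsPerfectCodeOfGroup G (H : Set G) := by
      intro hko
      obtain ⟨c, hcc⟩ := hko
      have hkc : (k : ℤ) = 2 * (c : ℤ) + 1 := by push_cast [hcc]; ring
      apply code_of_index_set g H k hmem hgen
        {i : ℤ | i ≠ 0 ∧ -(c : ℤ) ≤ i ∧ i ≤ (c : ℤ)}
      · rintro i ⟨h0, h1, h2⟩
        exact ⟨-i, ⟨by omega, by omega, by omega⟩, rfl⟩
      · rintro i ⟨h0, h1, h2⟩ hdvd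
        have habs : (k : ℤ) ≤ |i| := Int.le_of_dvd (abs_pos.mpr h0) ((dvd_abs _ _).mpr hdvd)
        have h3 : |i| ≤ (c : ℤ) := abs_le.mpr ⟨h1, h2⟩
        linarith
      · intro a ha
        have hkpos : (0 : ℤ) < (k : ℤ) := by
          have : (0:ℤ) ≤ (c:ℤ) := Int.natCast_nonneg c
          linarith
        set r := a % (k : ℤ) with hrdef
        have hr0 : 0 ≤ r := Int.emod_nonneg a (by linarith)
        have hrlt : r < (k : ℤ) := Int.emod_lt_of_pos a hkpos
        have hdr : (k : ℤ) ∣ a - r := by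
          rw [hrdef, Int.emod_def]
          exact ⟨a / (k : ℤ), by ring⟩
        have hrne : r ≠ 0 := by
          intro h
          apply ha
          apply Int.dvd_of_emod_eq_zero
          rw [← hrdef]; exact h
        by_cases hrc : r ≤ (c : ℤ)
        · refine ⟨-r, ⟨neg_ne_zero.mpr hrne, by linarith, by linarith⟩, ?_⟩
          rw [← sub_eq_add_neg]; exact hdr
        · push_neg at hrc
          refine ⟨(k : ℤ) - r, ⟨(by linarith : (0:ℤ) < (k:ℤ) - r).ne',
            by linarith, by linarith⟩, ?_⟩
          have h4 : a + ((k : ℤ) - r) = (a - r) + (k : ℤ) := by ring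
          rw [h4]; exact dvd_add hdr dvd_rfl
      · rintro i ⟨hi0, hi1, hi2⟩ j ⟨hj0, hj1, hj2⟩ hdvd
        have hij : i = j := by
          by_contra hne
          have habs : (k : ℤ) ≤ |i - j| :=
            Int.le_of_dvd (abs_pos.mpr (sub_ne_zero.mpr hne)) ((dvd_abs _ _).mpr hdvd)
          have h3 : |i - j| ≤ 2 * (c : ℤ) := abs_le.mpr ⟨by linarith, by linarith⟩
          linarith
        rw [hij]
    have evenk : Odd m → Even k → IsPerfectCodeOfGroup G (H : Set G) := by
      intro hmo hke
      obtain ⟨t, ht⟩ := hmo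
      obtain ⟨c, hcc⟩ := hke
      have hkc : (k : ℤ) = 2 * (c : ℤ) := by push_cast [hcc]; ring
      have hmz : (m : ℤ) = 2 * (t : ℤ) + 1 := by push_cast [ht]; ring
      have hcne : c ≠ 0 := by intro h; exact hk0 (by omega)
      have hc1 : 1 ≤ (c : ℤ) := by omega
      apply code_of_index_set g H k hmem hgen
        {i : ℤ | (i ≠ 0 ∧ -(c : ℤ) < i ∧ i < (c : ℤ)) ∨ i = (m : ℤ) * (c : ℤ)}
      · rintro i (⟨h0, h1, h2⟩ | rfl)
        · exact ⟨-i, Or.inl ⟨by omega, by omega, by omega⟩, rfl⟩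
        · refine ⟨(m : ℤ) * (c : ℤ), Or.inr rfl, ?_⟩
          have hcast : ((m * k : ℕ) : ℤ) = (m : ℤ) * (k : ℤ) := by push_cast; ring
          have hpowmk : g ^ ((m : ℤ) * (k : ℤ)) = 1 := by
            rw [← hcast]; exact (hone _).mpr dvd_rfl
          have hsq : g ^ ((m : ℤ) * (c : ℤ)) * g ^ ((m : ℤ) * (c : ℤ)) = 1 := by
            rw [← zpow_add,
              show (m:ℤ) * (c:ℤ) + (m:ℤ) * (c:ℤ) = (m:ℤ) * (k:ℤ) by rw [hkc]; ring]
            exact hpowmk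
          rw [zpow_neg]
          exact inv_eq_of_mul_eq_one_right hsq
      · rintro i (⟨h0, h1, h2⟩ | rfl) hdvd
        · have habs : (k : ℤ) ≤ |i| := Int.le_of_dvd (abs_pos.mpr h0) ((dvd_abs _ _).mpr hdvd)
          have h3 : |i| ≤ (c : ℤ) := abs_le.mpr ⟨by linarith, by linarith⟩
          linarith
        · obtain ⟨s, hs⟩ := hdvd
          rw [hkc, hmz] at hs
          have hz : (c : ℤ) * (2 * (t : ℤ) + 1 - 2 * s) = 0 := by linear_combination hs
          rcases mul_eq_zero.mp hz with h | h
          · linarith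
          · omega
      · intro a ha
        have hkpos : (0 : ℤ) < (k : ℤ) := by linarith
        set r := a % (k : ℤ) with hrdef
        have hr0 : 0 ≤ r := Int.emod_nonneg a (by linarith)
        have hrlt : r < (k : ℤ) := Int.emod_lt_of_pos a hkpos
        have hdr : (k : ℤ) ∣ a - r := by
          rw [hrdef, Int.emod_def]
          exact ⟨a / (k : ℤ), by ring⟩
        have hrne : r ≠ 0 := by
          intro h
          apply ha
          apply Int.dvd_of_emod_eq_zero
          rw [← hrdef]; exact h
        rcases lt_trichotomy r (c : ℤ) with hrc | hrc | hrc
        · refine ⟨-r, Or.inl ⟨neg_ne_zero.mpr hrne, by linarith, by linarith⟩, ?_⟩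
          rw [← sub_eq_add_neg]; exact hdr
        · refine ⟨(m : ℤ) * (c : ℤ), Or.inr rfl, ?_⟩
          have h4 : a + (m : ℤ) * (c : ℤ) = (a - r) + (k : ℤ) * ((t : ℤ) + 1) := by
            rw [hkc, hmz, ← hrc]; ring
          rw [h4]; exact dvd_add hdr (dvd_mul_right _ _)
        · refine ⟨(k : ℤ) - r, Or.inl ⟨(by linarith : (0:ℤ) < (k:ℤ) - r).ne',
            by linarith, by linarith⟩, ?_⟩
          have h4 : a + ((k : ℤ) - r) = (a - r) + (k : ℤ) := by ring
          rw [h4]; exact dvd_add hdr dvd_rfl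
      · have habs' : ∀ i : ℤ, i ≠ 0 → -(c : ℤ) < i → i < (c : ℤ) →
            ¬ (k : ℤ) ∣ i - (m : ℤ) * (c : ℤ) := by
          rintro i h0 h1 h2 ⟨s, hs⟩
          rw [hkc] at hs
          have hieq : i = (c : ℤ) * (2 * (t : ℤ) + 2 * s + 1) := by
            linear_combination hs + (c : ℤ) * hmz
          have h1' : 1 ≤ |2 * (t : ℤ) + 2 * s + 1| := Int.one_le_abs (by omega)
          have hle : (c : ℤ) ≤ |i| := by
            rw [hieq, abs_mul, abs_of_nonneg (by linarith : (0:ℤ) ≤ (c:ℤ))]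
            exact le_mul_of_one_le_right (by linarith) h1'
          have hlt : |i| < (c : ℤ) := abs_lt.mpr ⟨h1, h2⟩
          linarith
        rintro i (⟨hi0, hi1, hi2⟩ | rfl) j (⟨hj0, hj1, hj2⟩ | rfl) hdvd
        · have hij : i = j := by
            by_contra hne
            have habs : (k : ℤ) ≤ |i - j| :=
              Int.le_of_dvd (abs_pos.mpr (sub_ne_zero.mpr hne)) ((dvd_abs _ _).mpr hdvd)
            have h3 : |i - j| < 2 * (c : ℤ) := abs_lt.mpr ⟨by linarith, by linarith⟩
            linarith
          rw [hij]
        · exact absurd hdvd (habs' i hi0 hi1 hi2)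
        · have hd2 : (k : ℤ) ∣ j - (m : ℤ) * (c : ℤ) := by
            rw [← neg_sub]; exact dvd_neg.mpr hdvd
          exact absurd hd2 (habs' j hj0 hj1 hj2)
        · rfl
    rintro (hm | hk)
    · rcases Nat.even_or_odd k with hke | hko
      · exact evenk hm hke
      · exact oddk hko
    · exact oddk hk
end

section
/- Let G be a finite group and H a normal subgroup of G. Then H is a perfect code of G if and only if for every g ∈ G with g² ∈ H there exists h ∈ H such that (g h)² = e. -/
theorem exists_inv_closed_section (G : Type*) [Group G] (H : Subgroup G) [hnorm : H.Normal]
    (hyp : ∀ g : G, g ^ 2 ∈ H → ∃ h ∈ H, (g * h) ^ 2 = 1) :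
    ∃ f : G ⧸ H → G, (∀ q, ((f q : G) : G ⧸ H) = q) ∧ (∀ q, f q⁻¹ = (f q)⁻¹) := by
  classical
  letI : LinearOrder (G ⧸ H) := IsWellOrder.linearOrder WellOrderingRel
  choose h hmem hsq using hyp
  refine ⟨fun q => if hq : (q.out : G) ^ 2 ∈ H then q.out * h q.out hq
      else if q < q⁻¹ then q.out else (q⁻¹).out⁻¹, ?_, ?_⟩
  · intro q
    beta_reduce
    by_cases hq : (q.out : G) ^ 2 ∈ H
    · rw [dif_pos hq, QuotientGroup.mk_mul, (QuotientGroup.eq_one_iff _).mpr (hmem _ hq),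
        mul_one, QuotientGroup.out_eq']
    · rw [dif_neg hq]
      by_cases hlt : q < q⁻¹
      · rw [if_pos hlt, QuotientGroup.out_eq']
      · rw [if_neg hlt, QuotientGroup.mk_inv, QuotientGroup.out_eq', inv_inv]
  · intro q
    beta_reduce
    have key : ∀ r : G ⧸ H, ((r.out : G) ^ 2 ∈ H) ↔ r ^ 2 = 1 := by
      intro r
      rw [← QuotientGroup.eq_one_iff ((r.out : G) ^ 2), QuotientGroup.mk_pow,
        QuotientGroup.out_eq']
    by_cases hq : (q.out : G) ^ 2 ∈ H
    · have hq1 : q ^ 2 = 1 := (key q).mp hq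
      have hqinv : q⁻¹ = q := by
        rw [← mul_one q⁻¹, ← hq1, pow_two, inv_mul_cancel_left]
      rw [hqinv]; simp only [dif_pos hq]
      have := hsq _ hq
      rw [pow_two] at this
      exact (inv_eq_of_mul_eq_one_right this).symm
    · have hq1 : q ^ 2 ≠ 1 := fun hh => hq ((key q).mpr hh)
      have hqi : ¬ ((q⁻¹).out : G) ^ 2 ∈ H := by
        rw [key]
        intro hh
        exact hq1 (by rw [← inv_inv (q^2), ← inv_pow, hh, inv_one])
      have hne : q ≠ q⁻¹ := by
        intro hh
        have h2 : q * q = q * q⁻¹ := congrArg (q * ·) hh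
        exact hq1 (by rw [pow_two, h2, mul_inv_cancel])
      rw [dif_neg hq, dif_neg hqi]
      by_cases hlt : q < q⁻¹
      · rw [if_pos hlt, if_neg (by rw [inv_inv]; exact not_lt.mpr hlt.le), inv_inv]
      · have hlt' : q⁻¹ < q := lt_of_le_of_ne (not_lt.mp hlt) (Ne.symm hne)
        rw [if_neg hlt, if_pos (by rw [inv_inv]; exact hlt'), inv_inv]

/-- A normal subgroup `H` of a finite group `G` is a perfect code of `G` iff for every
`g ∈ G` with `g² ∈ H` there is `h ∈ H` with `(g h)² = 1`. -/
theorem normal_perfect_code_iff (G : Type*) [Group G] [Fintype G]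
    (H : Subgroup G) (hnorm : H.Normal) :
    IsPerfectCodeOfGroup G (H : Set G) ↔
      ∀ g : G, g ^ 2 ∈ H → ∃ h ∈ H, (g * h) ^ 2 = 1 := by
  constructor
  · rintro ⟨S, hSinv, hS1, _, hdom⟩ g hg
    have Sinv : ∀ x : G, x ∈ S → x⁻¹ ∈ S := by
      intro x hx
      rw [← hSinv]
      simpa using hx
    by_cases hgH : g ∈ H
    · exact ⟨g⁻¹, H.inv_mem hgH, by simp⟩
    · obtain ⟨u, ⟨huH, hadj⟩, huniq⟩ := hdom g hgH
      rw [cayley, SimpleGraph.fromRel_adj] at hadj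
      obtain ⟨hne, hs⟩ := hadj
      have hs' : u * g⁻¹ ∈ S := by
        rcases hs with hs | hs
        · exact hs
        · have := Sinv _ hs
          rwa [mul_inv_rev, inv_inv] at this
      -- second neighbor candidate: u₂ = g * u⁻¹ * g
      have hu₂H : g * u⁻¹ * g ∈ H := by
        have h1 : g * u⁻¹ * g⁻¹ ∈ H := hnorm.conj_mem _ (H.inv_mem huH) g
        have := H.mul_mem h1 hg
        have he : g * u⁻¹ * g⁻¹ * g ^ 2 = g * u⁻¹ * g := by group
        rwa [he] at this
      have hadj₂ : (cayley G S).Adj g (g * u⁻¹ * g) := by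
        rw [cayley, SimpleGraph.fromRel_adj]
        refine ⟨fun hh => hgH ?_, Or.inl ?_⟩
        · have h1 : g * 1 = g * (u⁻¹ * g) := by rw [mul_one, ← mul_assoc, ← hh]
          have h2 : (1 : G) = u⁻¹ * g := mul_left_cancel h1
          have h3 : u = g := by
            calc u = u * 1 := (mul_one u).symm
              _ = u * (u⁻¹ * g) := by rw [← h2]
              _ = g := by group
          exact h3 ▸ huH
        · have he : g * u⁻¹ * g * g⁻¹ = (u * g⁻¹)⁻¹ := by group
          rw [he]
          exact Sinv _ hs'
      have heq : g * u⁻¹ * g = u := huniq _ ⟨hu₂H, hadj₂⟩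
      refine ⟨u⁻¹, H.inv_mem huH, ?_⟩
      calc (g * u⁻¹) ^ 2 = (g * u⁻¹ * g) * u⁻¹ := by rw [pow_two, ← mul_assoc]
        _ = 1 := by rw [heq, mul_inv_cancel]
  · intro hyp
    obtain ⟨f, hsec, hinv⟩ := exists_inv_closed_section G H hyp
    refine ⟨f '' {q | q ≠ 1}, ?_, ?_, ?_, ?_⟩
    · ext x
      simp only [Set.mem_inv, Set.mem_image, Set.mem_setOf_eq]
      constructor
      · rintro ⟨q, hq, hfq⟩
        exact ⟨q⁻¹, by simpa using hq, by rw [hinv, hfq, inv_inv]⟩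
      · rintro ⟨q, hq, hfq⟩
        exact ⟨q⁻¹, by simpa using hq, by rw [hinv, hfq]⟩
    · rintro ⟨q, hq, hfq⟩
      apply hq
      rw [← hsec q, hfq, QuotientGroup.mk_one]
    · rintro u huH v hvH hadj
      rw [cayley, SimpleGraph.fromRel_adj] at hadj
      obtain ⟨hne, hs | hs⟩ := hadj
      · obtain ⟨q, hq, hfq⟩ := hs
        apply hq
        rw [← hsec q, hfq]
        exact (QuotientGroup.eq_one_iff _).mpr (H.mul_mem hvH (H.inv_mem huH))
      · obtain ⟨q, hq, hfq⟩ := hs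
        apply hq
        rw [← hsec q, hfq]
        exact (QuotientGroup.eq_one_iff _).mpr (H.mul_mem huH (H.inv_mem hvH))
    · intro v hvH
      have hv1 : (v : G ⧸ H) ≠ 1 := fun hh => hvH ((QuotientGroup.eq_one_iff v).mp hh)
      refine ⟨f (v : G ⧸ H)⁻¹ * v, ⟨?_, ?_⟩, ?_⟩
      · show f (v : G ⧸ H)⁻¹ * v ∈ H
        rw [← QuotientGroup.eq_one_iff, QuotientGroup.mk_mul, hsec, inv_mul_cancel]
      · rw [cayley, SimpleGraph.fromRel_adj]
        constructor
        · intro hh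
          apply hvH
          rw [hh]
          exact (QuotientGroup.eq_one_iff _).mp (by rw [QuotientGroup.mk_mul, hsec, inv_mul_cancel])
        · left
          rw [mul_assoc, mul_inv_cancel, mul_one]
          exact ⟨(v : G ⧸ H)⁻¹, by simpa using hv1, rfl⟩
      · rintro u ⟨huH, hadj⟩
        rw [cayley, SimpleGraph.fromRel_adj] at hadj
        obtain ⟨hne, hs⟩ := hadj
        have hs' : ∃ q ≠ (1 : G ⧸ H), f q = u * v⁻¹ := by
          rcases hs with hs | hs
          · obtain ⟨q, hq, hfq⟩ := hs
            exact ⟨q, hq, hfq⟩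
          · obtain ⟨q, hq, hfq⟩ := hs
            refine ⟨q⁻¹, by simpa using hq, ?_⟩
            rw [hinv, hfq, mul_inv_rev, inv_inv]
        obtain ⟨q, hq, hfq⟩ := hs'
        have hqval : q = (v : G ⧸ H)⁻¹ := by
          rw [← hsec q, hfq, QuotientGroup.mk_mul, QuotientGroup.mk_inv,
            (QuotientGroup.eq_one_iff u).mpr huH, one_mul]
        rw [← hqval, hfq]
        group
end
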